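/- arXiv:2011.13302 — 7 statements merged into one kernel-verified Lean document; each statement's English description precedes it below -/
import Mathlib

section
/- Fix an integer d ≥ 2 and a real number p ≥ 1, and set θ = 1/p. Let the coefficients a_i^{(k)} be defined by the stated recursion. Then for every c ∈ [0,1]: a_1^{(d)}·(1-c)^{d-1} + Σ_{i=2}^{d} a_i^{(d)} · ((d-1)!/((d-i)!·(i-2)!)) · ∫_{c^θ}^{1} (1 - c/x^p)^{d-1} · x^{d-i} (1-x)^{i-2} dx = (1 - c^θ)^{d-1}. (In other words, the probability measure a_1^{(d)} δ_1 + Σ_{i=2}^d a_i^{(d)} Beta(d+1-i, i-1) has Williamson d-transform x ↦ (1-x^θ)_+^{d-1} after the power transform v ↦ v^p.) -/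
/-!
Write `g(x) = 1 - c / x ^ p` and let `W(m; s, t)` be the integral of `g₊ ^ m` against
`Beta(s + 1, t)`, read as `δ₁` when `t = 0`. Since `x g'(x) = p (1 - g(x))`, integrating
`g ^ (m + 1) x ^ (s + 1) (1 - x) ^ t` by parts over `[c ^ θ, 1]` gives
`W(m; s, t + 1) = (1 - θ (s + 1) / (m + 1)) W(m + 1; s, t + 1) + θ (s + 1) / (m + 1) W(m + 1; s + 1, t)`,
which is exactly the transition of the recursion for `a`. Hence
`∑ i, a_{i+1}^{(k)} W(k - 1; k - 1 - i, r + i)` depends only on `k + r`, and for `k = 1` it is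
`W(0; 0, r) = (1 - c ^ θ) ^ r`.
-/

open MeasureTheory Finset

noncomputable section

def williamsonKernel (p c : ℝ) (m s t : ℕ) (x : ℝ) : ℝ :=
  (1 - c / x ^ p) ^ m * x ^ s * (1 - x) ^ t

def williamsonMoment (p c : ℝ) (m s t : ℕ) : ℝ :=
  ∫ x in c ^ (1 / p)..1, williamsonKernel p c m s t x

/-- For `0 ≤ c ≤ 1`, the integral of `(1 - c / x ^ p)₊ ^ m` against `Beta(s + 1, t)` when `t ≥ 1`,
and against `δ₁` when `t = 0`. -/
def betaWilliamson (p c : ℝ) (m s : ℕ) : ℕ → ℝ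
  | 0 => (1 - c) ^ m
  | t + 1 => (((s + t + 1).factorial : ℝ) / (s.factorial * t.factorial)) * williamsonMoment p c m s t

end

section

variable {p c : ℝ}

lemma hasDerivAt_one_sub_div_rpow {x : ℝ} (hx : 0 < x) :
    HasDerivAt (fun y : ℝ => 1 - c / y ^ p) (p * (c / x ^ p) / x) x := by
  have hxp : x ^ p ≠ 0 := (Real.rpow_pos_of_pos hx p).ne'
  refine (((hasDerivAt_const x c).div (Real.hasDerivAt_rpow_const (Or.inl hx.ne')) hxp).const_sub
    1).congr_deriv ?_
  rw [Real.rpow_sub_one hx.ne']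
  field_simp
  ring

lemma hasDerivAt_williamsonKernel (m s t : ℕ) {x : ℝ} (hx : 0 < x) :
    HasDerivAt (williamsonKernel p c (m + 1) (s + 1) t)
      ((m + 1) * p * (williamsonKernel p c m s t x - williamsonKernel p c (m + 1) s t x)
        + (s + 1) * williamsonKernel p c (m + 1) s t x
        - t * williamsonKernel p c (m + 1) (s + 1) (t - 1) x) x := by
  have h := (((hasDerivAt_one_sub_div_rpow (c := c) (p := p) hx).pow (m + 1)).mul
    (hasDerivAt_pow (s + 1) x)).mul (((hasDerivAt_id x).const_sub 1).pow t)
  refine h.congr_deriv ?_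
  simp only [williamsonKernel, Nat.add_sub_cancel, id, Pi.mul_apply, Pi.pow_apply]
  generalize c / x ^ p = u
  rw [pow_succ x s]
  field_simp
  push_cast
  ring

lemma continuousOn_williamsonKernel (hc : 0 ≤ c) (m s t : ℕ) :
    ContinuousOn (williamsonKernel p c m s t) (Set.uIcc (c ^ (1 / p)) 1) := by
  unfold williamsonKernel
  refine ContinuousOn.mul (ContinuousOn.mul (ContinuousOn.pow ?_ m) (continuousOn_pow s))
    ((continuous_const.sub continuous_id).pow t).continuousOn
  rcases hc.eq_or_lt with rfl | hc
  · simpa only [zero_div] using continuousOn_const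
  have hpos : ∀ x ∈ Set.uIcc (c ^ (1 / p)) 1, 0 < x := fun x hx =>
    lt_of_lt_of_le (lt_min (Real.rpow_pos_of_pos hc _) one_pos) hx.1
  exact continuousOn_const.sub (continuousOn_const.div
    (fun x hx => (Real.continuousAt_rpow_const x p (Or.inl (hpos x hx).ne')).continuousWithinAt)
    (fun x hx => (Real.rpow_pos_of_pos (hpos x hx) p).ne'))

lemma intervalIntegrable_williamsonKernel (hc : 0 ≤ c) (m s t : ℕ) :
    IntervalIntegrable (williamsonKernel p c m s t) volume (c ^ (1 / p)) 1 :=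
  (continuousOn_williamsonKernel hc m s t).intervalIntegrable

lemma williamsonKernel_root_eq_zero (hp : p ≠ 0) (hc : 0 ≤ c) (m s t : ℕ) :
    williamsonKernel p c (m + 1) (s + 1) t (c ^ (1 / p)) = 0 := by
  rcases hc.eq_or_lt with rfl | hc
  · rw [williamsonKernel, Real.zero_rpow (one_div_ne_zero hp), zero_pow s.succ_ne_zero]
    ring
  have hroot : (c ^ (1 / p)) ^ p = c := by
    rw [← Real.rpow_mul hc.le, one_div_mul_cancel hp, Real.rpow_one]
  rw [williamsonKernel, hroot, div_self hc.ne', sub_self, zero_pow m.succ_ne_zero]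
  ring

lemma williamsonMoment_relation (hp : p ≠ 0) (hc : 0 ≤ c) (m s t : ℕ) :
    (m + 1) * p * (williamsonMoment p c m s t - williamsonMoment p c (m + 1) s t)
      + (s + 1) * williamsonMoment p c (m + 1) s t
      - t * williamsonMoment p c (m + 1) (s + 1) (t - 1)
      = (1 - c) ^ (m + 1) * 0 ^ t := by
  have hint := intervalIntegrable_williamsonKernel (p := p) hc
  have hlin := ((hint m s t).sub (hint (m + 1) s t)).const_mul ((m + 1) * p)
    |>.add ((hint (m + 1) s t).const_mul (s + 1))
  have hftc := intervalIntegral.integral_eq_sub_of_hasDeriv_right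
    (continuousOn_williamsonKernel (p := p) hc (m + 1) (s + 1) t)
    (fun x hx => (hasDerivAt_williamsonKernel m s t
      (lt_of_le_of_lt (le_min (Real.rpow_nonneg hc _) zero_le_one) hx.1)).hasDerivWithinAt)
    (hlin.sub ((hint (m + 1) (s + 1) (t - 1)).const_mul _))
  rw [intervalIntegral.integral_sub hlin ((hint (m + 1) (s + 1) (t - 1)).const_mul _),
    intervalIntegral.integral_add (((hint m s t).sub (hint (m + 1) s t)).const_mul _)
      ((hint (m + 1) s t).const_mul _),
    intervalIntegral.integral_const_mul, intervalIntegral.integral_const_mul,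
    intervalIntegral.integral_const_mul, intervalIntegral.integral_sub (hint m s t) (hint (m + 1) s t),
    williamsonKernel_root_eq_zero hp hc] at hftc
  simpa [williamsonMoment, williamsonKernel] using hftc

lemma betaWilliamson_succ (hp : p ≠ 0) (hc : 0 ≤ c) (m s t : ℕ) :
    betaWilliamson p c m s (t + 1)
      = (1 - 1 / p * (s + 1) / (m + 1)) * betaWilliamson p c (m + 1) s (t + 1)
        + 1 / p * (s + 1) / (m + 1) * betaWilliamson p c (m + 1) (s + 1) t := by
  have hrel := williamsonMoment_relation hp hc m s t
  cases t with
  | zero =>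
    simp only [betaWilliamson, Nat.factorial_succ, Nat.factorial_zero] at hrel ⊢
    push_cast at hrel ⊢
    field_simp
    linear_combination hrel
  | succ t =>
    simp only [betaWilliamson, Nat.add_sub_cancel, show s + 1 + t + 1 = s + (t + 1) + 1 by ring,
      Nat.factorial_succ s, Nat.factorial_succ t] at hrel ⊢
    push_cast at hrel ⊢
    field_simp
    linear_combination hrel

lemma betaWilliamson_zero_zero (t : ℕ) :
    betaWilliamson p c 0 0 t = (1 - c ^ (1 / p)) ^ t := by
  cases t with
  | zero => simp [betaWilliamson]
  | succ t =>
    simp only [betaWilliamson, williamsonMoment, williamsonKernel, pow_zero, one_mul]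
    rw [intervalIntegral.integral_comp_sub_left (fun u => u ^ t), sub_self, integral_pow,
      zero_pow t.succ_ne_zero, sub_zero, zero_add, Nat.factorial_succ, Nat.factorial_zero]
    push_cast
    field_simp

lemma sum_betaWilliamson_level_succ (hp : p ≠ 0) (hc : 0 ≤ c) {k : ℕ} (hk : 1 ≤ k)
    (b b' : ℕ → ℝ) (hzero : b 0 = 0) (htop : b (k + 1) = 0)
    (hrec : ∀ i, 1 ≤ i → i ≤ k + 1 →
      b' i = b i * (1 / p * ((k : ℝ) + 1 - (i : ℝ)) / (k : ℝ))
        + b (i - 1) * (1 - 1 / p * ((k : ℝ) + 1 - (i : ℝ) + 1) / (k : ℝ))) (r : ℕ) :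
    ∑ i ∈ range (k + 1), b' (i + 1) * betaWilliamson p c k (k - i) (r + i)
      = ∑ i ∈ range k, b (i + 1) * betaWilliamson p c (k - 1) (k - 1 - i) (r + 1 + i) := by
  obtain ⟨n, rfl⟩ : ∃ n, k = n + 1 := ⟨k - 1, by omega⟩
  have hsplit : ∀ i ∈ range (n + 2), b' (i + 1) * betaWilliamson p c (n + 1) (n + 1 - i) (r + i)
      = b (i + 1) * (1 / p * ((n + 1 : ℕ) + 1 - (i + 1 : ℕ)) / (n + 1 : ℕ))
          * betaWilliamson p c (n + 1) (n + 1 - i) (r + i)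
        + b i * (1 - 1 / p * ((n + 1 : ℕ) + 1 - (i + 1 : ℕ) + 1) / (n + 1 : ℕ))
          * betaWilliamson p c (n + 1) (n + 1 - i) (r + i) := fun i hi => by
    rw [hrec (i + 1) (by omega) (by simp only [mem_range] at hi; omega), Nat.add_sub_cancel]
    ring
  rw [sum_congr rfl hsplit, sum_add_distrib, sum_range_succ _ (n + 1), sum_range_succ' _ (n + 1),
    htop, hzero]
  simp only [zero_mul, add_zero]
  rw [← sum_add_distrib]
  refine sum_congr rfl fun i hi => ?_
  obtain ⟨s, hs⟩ : ∃ s, n = s + i := ⟨n - i, by simp only [mem_range] at hi; omega⟩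
  subst hs
  rw [show s + i + 1 - i = s + 1 by omega, show s + i + 1 - (i + 1) = s by omega,
    show s + i + 1 - 1 - i = s by omega, show s + i + 1 - 1 = s + i by omega,
    show r + 1 + i = r + i + 1 by ring, show r + (i + 1) = r + i + 1 by ring,
    betaWilliamson_succ hp hc (s + i) s (r + i)]
  push_cast
  ring

lemma sum_betaWilliamson_eq_pow (hp : p ≠ 0) (hc : 0 ≤ c) (a : ℕ → ℕ → ℝ)
    (hzero : ∀ k, a k 0 = 0) (htop : ∀ k, a k (k + 1) = 0) (hinit : a 1 1 = 1)
    (hrec : ∀ k i, 1 ≤ k → 1 ≤ i → i ≤ k + 1 →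
      a (k + 1) i = a k i * (1 / p * ((k : ℝ) + 1 - (i : ℝ)) / (k : ℝ))
        + a k (i - 1) * (1 - 1 / p * ((k : ℝ) + 1 - (i : ℝ) + 1) / (k : ℝ)))
    {k : ℕ} (hk : 1 ≤ k) (r : ℕ) :
    ∑ i ∈ range k, a k (i + 1) * betaWilliamson p c (k - 1) (k - 1 - i) (r + i)
      = (1 - c ^ (1 / p)) ^ (k - 1 + r) := by
  induction k, hk using Nat.le_induction generalizing r with
  | base => simp [hinit, betaWilliamson_zero_zero]
  | succ k hk ih =>
    rw [Nat.add_sub_cancel, sum_betaWilliamson_level_succ hp hc hk (a k) (a (k + 1)) (hzero k)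
      (htop k) (hrec k · hk), ih, show k - 1 + (r + 1) = k + r by omega]

lemma sum_Icc_two_eq_sum_range {M : Type*} [AddCommMonoid M] (f : ℕ → M) (n : ℕ) :
    ∑ i ∈ Icc 2 (n + 1), f i = ∑ i ∈ range n, f (i + 2) := by
  rw [← Ico_add_one_right_eq_Icc, range_eq_Ico, sum_Ico_add', zero_add]
  rfl

end

/-- The probability measure
`a_1^{(d)} δ_1 + Σ_{i=2}^d a_i^{(d)} Beta(d+1-i, i-1)` has Williamson `d`-transform
`x ↦ (1-x^θ)_+^{d-1}` after the power transform `v ↦ v^p`, where the coefficients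
`a_i^{(k)}` are given by the recursion of the paper. -/
theorem williamson_transform_of_mixture
    (d : ℕ) (hd : 2 ≤ d) (p θ : ℝ) (hp : 1 ≤ p) (hθ : θ = 1 / p)
    (a : ℕ → ℕ → ℝ)
    (hzero : ∀ k, a k 0 = 0)
    (htop : ∀ k, a k (k + 1) = 0)
    (hinit : a 1 1 = 1)
    (hrec : ∀ k i, 1 ≤ k → 1 ≤ i → i ≤ k + 1 →
      a (k + 1) i = a k i * (θ * ((k : ℝ) + 1 - (i : ℝ)) / (k : ℝ))
        + a k (i - 1) * (1 - θ * ((k : ℝ) + 1 - (i : ℝ) + 1) / (k : ℝ))) :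
    ∀ c ∈ Set.Icc (0 : ℝ) 1,
      a d 1 * (1 - c) ^ (d - 1)
        + ∑ i ∈ Finset.Icc 2 d,
            a d i * ((Nat.factorial (d - 1) : ℝ) /
                ((Nat.factorial (d - i) : ℝ) * (Nat.factorial (i - 2) : ℝ)))
              * ∫ x in (c ^ θ)..1,
                  (1 - c / x ^ p) ^ (d - 1) * x ^ (d - i) * (1 - x) ^ (i - 2)
      = (1 - c ^ θ) ^ (d - 1) := by
  rintro c ⟨hc, -⟩
  subst hθ
  obtain ⟨n, rfl⟩ : ∃ n, d = n + 1 := ⟨d - 1, by omega⟩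
  have hmix := sum_betaWilliamson_eq_pow (zero_lt_one.trans_le hp).ne' hc a hzero htop hinit hrec
    (Nat.le_add_left 1 n) 0
  simp only [sum_range_succ', Nat.add_sub_cancel, Nat.sub_zero, zero_add, add_zero] at hmix
  rw [Nat.add_sub_cancel, sum_Icc_two_eq_sum_range, add_comm, ← hmix]
  congr 1
  refine sum_congr rfl fun i hi => ?_
  obtain ⟨s, rfl⟩ : ∃ s, n = s + i + 1 := ⟨n - i - 1, by simp only [mem_range] at hi; omega⟩
  simp only [betaWilliamson, williamsonMoment, williamsonKernel, Nat.add_sub_cancel,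
    show s + i + 1 + 1 - (i + 2) = s by omega, show s + i + 1 - (i + 1) = s by omega]
  ring
end

section
/- Fix a real number p ≥ 1 and set θ = 1/p, and let the coefficients a_i^{(k)} be defined by the stated recursion. Then for every integer k ≥ 1 and every 1 ≤ i ≤ k one has a_i^{(k)} ≥ 0, and Σ_{i=1}^{k} a_i^{(k)} = 1; i.e., (a_1^{(k)},…,a_k^{(k)}) lies in the standard unit simplex. -/
/-!
Read the recursion as one step of a Markov chain on the positions `1, …, k`: the mass
`a_j^{(k-1)}` stays at `j` with probability `w_j = θ (k - j) / (k - 1)` and moves to `j + 1` with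
probability `1 - w_j`. Since `0 ≤ θ ≤ 1`, every `w_j` with `1 ≤ j ≤ k - 1` lies in `[0, 1]`, so the
step preserves nonnegativity and total mass, and induction from `a^{(1)} = (1)` gives the claim.
-/

open Finset

theorem sum_Icc_one_succ_sub_one {M : Type*} [AddCommMonoid M] (g : ℕ → M) (m : ℕ) :
    ∑ i ∈ Icc 1 (m + 1), g (i - 1) = g 0 + ∑ i ∈ Icc 1 m, g i := by
  rw [← map_add_right_Icc 0 m 1, sum_map, Icc_eq_cons_Ioc m.zero_le, sum_cons,
    ← Icc_add_one_left_eq_Ioc]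
  simp

section TransferStep

variable {x w : ℕ → ℝ} {m : ℕ}

theorem sum_Icc_transfer_step (h0 : x 0 = 0) (htop : x (m + 1) = 0) :
    ∑ i ∈ Icc 1 (m + 1), (x i * w i + x (i - 1) * (1 - w (i - 1))) = ∑ i ∈ Icc 1 m, x i := by
  rw [sum_add_distrib, sum_Icc_succ_top (by omega), htop,
    sum_Icc_one_succ_sub_one (fun j => x j * (1 - w j)), h0]
  simp only [zero_mul, add_zero, zero_add, ← sum_add_distrib]
  exact sum_congr rfl fun i _ => by ring

theorem transfer_step_nonneg (h0 : x 0 = 0) (htop : x (m + 1) = 0)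
    (hx : ∀ j ∈ Icc 1 m, 0 ≤ x j) (hw : ∀ j ∈ Icc 1 m, w j ∈ Set.Icc 0 1)
    {i : ℕ} (hi : i ∈ Icc 1 (m + 1)) :
    0 ≤ x i * w i + x (i - 1) * (1 - w (i - 1)) := by
  rw [mem_Icc] at hi
  have hstay : 0 ≤ x i * w i := by
    rcases hi.2.lt_or_eq with hlt | rfl
    · have hj : i ∈ Icc 1 m := mem_Icc.2 ⟨hi.1, Nat.lt_succ_iff.1 hlt⟩
      exact mul_nonneg (hx i hj) (hw i hj).1
    · simp [htop]
  have hmove : 0 ≤ x (i - 1) * (1 - w (i - 1)) := by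
    rcases hi.1.eq_or_lt with rfl | hlt
    · simp [h0]
    · have hj : i - 1 ∈ Icc 1 m := mem_Icc.2 ⟨by omega, by omega⟩
      exact mul_nonneg (hx _ hj) (sub_nonneg.2 (hw _ hj).2)
  exact add_nonneg hstay hmove

end TransferStep

theorem stay_probability_mem_Icc {θ : ℝ} (hθ0 : 0 ≤ θ) (hθ1 : θ ≤ 1) {m j : ℕ}
    (hj : j ∈ Icc 1 m) : θ * ((m : ℝ) + 1 - j) / m ∈ Set.Icc 0 1 := by
  obtain ⟨h1, h2⟩ := mem_Icc.1 hj
  have hj1 : (1 : ℝ) ≤ j := by exact_mod_cast h1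
  have hjm : (j : ℝ) ≤ m := by exact_mod_cast h2
  have hm : (0 : ℝ) < m := by linarith
  refine ⟨by apply div_nonneg <;> nlinarith, (div_le_one hm).2 ?_⟩
  nlinarith

/-- The coefficients `a_i^{(k)}` defined by the recursion are nonnegative and
sum to one, i.e. `(a_1^{(k)},…,a_k^{(k)})` lies in the standard unit simplex. -/
theorem coefficients_in_simplex
    (p θ : ℝ) (hp : 1 ≤ p) (hθ : θ = 1 / p)
    (a : ℕ → ℕ → ℝ)
    (hzero : ∀ m, a m 0 = 0)
    (htop : ∀ m, a m (m + 1) = 0)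
    (hinit : a 1 1 = 1)
    (hrec : ∀ m i, 1 ≤ m → 1 ≤ i → i ≤ m + 1 →
      a (m + 1) i = a m i * (θ * ((m : ℝ) + 1 - (i : ℝ)) / (m : ℝ))
        + a m (i - 1) * (1 - θ * ((m : ℝ) + 1 - (i : ℝ) + 1) / (m : ℝ))) :
    ∀ k : ℕ, 1 ≤ k →
      (∀ i : ℕ, 1 ≤ i → i ≤ k → 0 ≤ a k i) ∧ ∑ i ∈ Finset.Icc 1 k, a k i = 1 := by
  have hθ0 : 0 ≤ θ := hθ ▸ by positivity
  have hθ1 : θ ≤ 1 := hθ ▸ (div_le_one (by linarith)).2 hp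
  intro k hk
  induction k, hk using Nat.le_induction with
  | base =>
    refine ⟨fun i h1 h2 => ?_, by simp [hinit]⟩
    rw [le_antisymm h2 h1, hinit]
    exact zero_le_one
  | succ m hm ih =>
    obtain ⟨hnonneg, hsum⟩ := ih
    set w : ℕ → ℝ := fun j => θ * ((m : ℝ) + 1 - j) / m
    have hstep : ∀ i ∈ Icc 1 (m + 1),
        a (m + 1) i = a m i * w i + a m (i - 1) * (1 - w (i - 1)) := by
      intro i hi
      obtain ⟨h1, h2⟩ := mem_Icc.1 hi
      rw [hrec m i hm h1 h2]
      simp only [w, Nat.cast_sub h1, Nat.cast_one]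
      ring
    have hw : ∀ j ∈ Icc 1 m, w j ∈ Set.Icc 0 1 := fun _ => stay_probability_mem_Icc hθ0 hθ1
    refine ⟨fun i h1 h2 => ?_, ?_⟩
    · have hi : i ∈ Icc 1 (m + 1) := mem_Icc.2 ⟨h1, h2⟩
      rw [hstep i hi]
      exact transfer_step_nonneg (hzero m) (htop m)
        (fun j hj => hnonneg j (mem_Icc.1 hj).1 (mem_Icc.1 hj).2) hw hi
    · rw [sum_congr rfl hstep, sum_Icc_transfer_step (hzero m) (htop m), hsum]
end

section
/- Fix an integer d ≥ 2 and a real number p ≥ 1, and set θ = 1/p. The function φ(x) = (1 - x^θ)_+^{d-1} (i.e., φ(x) = (1-x^θ)^{d-1} for x ∈ (0,1] and φ(x) = 0 for x ≥ 1) is d-monotone on (0,∞): φ is (d-2)-times differentiable on (0,∞), and for every k = 0,1,…,d-2 the function x ↦ (-1)^k φ^{(k)}(x) is nonnegative, nonincreasing and convex on (0,∞). -/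
/-!
Up to the sign `(-1) ^ k`, the `k`-th derivative of `φ` on `(0, ∞)` is a nonnegative combination
of terms `x ^ a * (1 - x ^ θ)₊ ^ m` with `a ≤ 0` and `m ≥ d - 1 - k`; this cone is stable under
`-d/dx` as long as `m ≥ 2`. Each such term is the product of `x ^ a` and of a convex nonincreasing
function of the concave `x ^ θ`, two nonnegative, nonincreasing, convex functions, so it is again
nonnegative, nonincreasing and convex, and these properties pass to the whole cone.
-/

open Set

lemma hasDerivAt_max_zero_pow {m : ℕ} (hm : 2 ≤ m) (t : ℝ) :
    HasDerivAt (fun u : ℝ => max u 0 ^ m) (m * max t 0 ^ (m - 1)) t := by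
  refine hasDerivAt_of_hasDerivAt_of_ne' (x := 0) (g := fun t : ℝ => m * max t 0 ^ (m - 1))
    (fun y hy => ?_) (by fun_prop) (by fun_prop) t
  rcases hy.lt_or_gt with hy | hy
  · have hzero : (fun u : ℝ => max u 0 ^ m) =ᶠ[nhds y] fun _ => 0 := by
      filter_upwards [Iio_mem_nhds hy] with u hu
      simp [max_eq_right (mem_Iio.1 hu).le, zero_pow (by omega : m ≠ 0)]
    simpa [max_eq_right hy.le, zero_pow (by omega : m - 1 ≠ 0)] using
      (hasDerivAt_const y (0 : ℝ)).congr_of_eventuallyEq hzero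
  · have hid : (fun u : ℝ => max u 0 ^ m) =ᶠ[nhds y] fun u => u ^ m := by
      filter_upwards [Ioi_mem_nhds hy] with u hu
      rw [max_eq_left (mem_Ioi.1 hu).le]
    simpa [max_eq_left hy.le] using (hasDerivAt_pow m y).congr_of_eventuallyEq hid

lemma IsPreconnected.convex_image {s : Set ℝ} {f : ℝ → ℝ} (hs : IsPreconnected s)
    (hf : ContinuousOn f s) : Convex ℝ (f '' s) :=
  (isPreconnected_iff_ordConnected.1 (hs.image f hf)).convex

lemma convexOn_rpow_of_nonpos {a : ℝ} (ha : a ≤ 0) :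
    ConvexOn ℝ (Ioi 0) fun x : ℝ => x ^ a := by
  have hlog : ConvexOn ℝ (Ioi 0) fun x => a * Real.log x := by
    simpa [neg_mul_neg] using (strictConcaveOn_log_Ioi.concaveOn.neg).smul (neg_nonneg.2 ha)
  have himage : Convex ℝ ((fun x => a * Real.log x) '' Ioi 0) :=
    isPreconnected_Ioi.convex_image (by fun_prop (disch := exact fun x hx => ne_of_gt hx))
  refine ((convexOn_exp.subset (subset_univ _) himage).comp hlog
    (Real.exp_monotone.monotoneOn _)).congr fun x hx => ?_
  simp [Real.rpow_def_of_pos (mem_Ioi.1 hx), mul_comm]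

lemma convexOn_max_one_sub_rpow_pow {θ : ℝ} (hθ₀ : 0 ≤ θ) (hθ₁ : θ ≤ 1) (m : ℕ) :
    ConvexOn ℝ (Ioi 0) fun x : ℝ => max (1 - x ^ θ) 0 ^ m := by
  have htrunc : ConvexOn ℝ univ fun u : ℝ => max (1 - u) 0 ^ m :=
    (((convexOn_const 1 convex_univ).sub (concaveOn_id convex_univ)).sup
      (convexOn_const 0 convex_univ)).pow (fun u _ => le_max_right _ _) m
  have hanti : AntitoneOn (fun u : ℝ => max (1 - u) 0 ^ m) univ := fun u _ v _ huv =>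
    pow_le_pow_left₀ (le_max_right _ _) (max_le_max (by linarith) le_rfl) m
  have hrpow : ConcaveOn ℝ (Ioi 0) fun x : ℝ => x ^ θ :=
    (Real.concaveOn_rpow hθ₀ hθ₁).subset Ioi_subset_Ici_self (convex_Ioi 0)
  have himage : Convex ℝ ((fun x : ℝ => x ^ θ) '' Ioi 0) :=
    isPreconnected_Ioi.convex_image (by fun_prop (disch := exact fun x hx => Or.inl (ne_of_gt hx)))
  exact (htrunc.subset (subset_univ _) himage).comp_concaveOn hrpow (hanti.mono (subset_univ _))

lemma antitoneOn_max_one_sub_rpow_pow {θ : ℝ} (hθ₀ : 0 ≤ θ) (m : ℕ) :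
    AntitoneOn (fun x : ℝ => max (1 - x ^ θ) 0 ^ m) (Ioi 0) := fun _ hx _ _ hxy =>
  pow_le_pow_left₀ (le_max_right _ _)
    (max_le_max (sub_le_sub_left (Real.rpow_le_rpow (le_of_lt hx) hxy hθ₀) 1) le_rfl) m

noncomputable def truncPowTerm (θ a : ℝ) (m : ℕ) (x : ℝ) : ℝ := x ^ a * max (1 - x ^ θ) 0 ^ m

section truncPowTerm

variable {θ a : ℝ} {m : ℕ}

lemma truncPowTerm_nonneg {x : ℝ} (hx : 0 ≤ x) : 0 ≤ truncPowTerm θ a m x :=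
  mul_nonneg (Real.rpow_nonneg hx a) (pow_nonneg (le_max_right _ _) m)

lemma antitoneOn_truncPowTerm (hθ₀ : 0 ≤ θ) (ha : a ≤ 0) :
    AntitoneOn (truncPowTerm θ a m) (Ioi 0) := fun _ hx _ hy hxy =>
  mul_le_mul (Real.antitoneOn_rpow_Ioi_of_exponent_nonpos ha hx hy hxy)
    (antitoneOn_max_one_sub_rpow_pow hθ₀ m hx hy hxy) (pow_nonneg (le_max_right _ _) m)
    (Real.rpow_nonneg (le_of_lt hx) a)

lemma convexOn_truncPowTerm (hθ₀ : 0 ≤ θ) (hθ₁ : θ ≤ 1) (ha : a ≤ 0) :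
    ConvexOn ℝ (Ioi 0) (truncPowTerm θ a m) :=
  (convexOn_rpow_of_nonpos ha).mul (convexOn_max_one_sub_rpow_pow hθ₀ hθ₁ m)
    (fun _ hx => Real.rpow_nonneg (le_of_lt hx) a) (fun _ _ => pow_nonneg (le_max_right _ _) m)
    ((Real.antitoneOn_rpow_Ioi_of_exponent_nonpos ha).monovaryOn
      (antitoneOn_max_one_sub_rpow_pow hθ₀ m))

lemma hasDerivAt_truncPowTerm (hm : 2 ≤ m) {x : ℝ} (hx : 0 < x) :
    HasDerivAt (truncPowTerm θ a m)
      (a * truncPowTerm θ (a - 1) m x - m * θ * truncPowTerm θ (a + θ - 1) (m - 1) x) x := by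
  have hpow : HasDerivAt (fun y : ℝ => y ^ a) (a * x ^ (a - 1)) x :=
    Real.hasDerivAt_rpow_const (Or.inl hx.ne')
  have hinner : HasDerivAt (fun y : ℝ => 1 - y ^ θ) (-(θ * x ^ (θ - 1))) x := by
    simpa using (Real.hasDerivAt_rpow_const (p := θ) (Or.inl hx.ne')).const_sub 1
  refine (hpow.fun_mul ((hasDerivAt_max_zero_pow hm _).comp x hinner)).congr_deriv ?_
  simp only [truncPowTerm, Function.comp_apply, add_sub_assoc, Real.rpow_add hx]
  ring

end truncPowTerm

def truncPowCone (θ : ℝ) (N : ℕ) : AddSubmonoid (ℝ → ℝ) :=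
  AddSubmonoid.closure {f | ∃ (c a : ℝ) (m : ℕ), 0 ≤ c ∧ a ≤ 0 ∧ N ≤ m ∧ f = c • truncPowTerm θ a m}

section truncPowCone

variable {θ : ℝ} {N : ℕ} {f : ℝ → ℝ}

lemma nonneg_of_mem_truncPowCone (hf : f ∈ truncPowCone θ N) {x : ℝ} (hx : 0 ≤ x) : 0 ≤ f x := by
  induction hf using AddSubmonoid.closure_induction with
  | mem f hf =>
    obtain ⟨c, a, m, hc, -, -, rfl⟩ := hf
    exact mul_nonneg hc (truncPowTerm_nonneg hx)
  | zero => exact le_rfl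
  | add f g _ _ hf hg => exact add_nonneg hf hg

lemma antitoneOn_of_mem_truncPowCone (hθ₀ : 0 ≤ θ) (hf : f ∈ truncPowCone θ N) :
    AntitoneOn f (Ioi 0) := by
  induction hf using AddSubmonoid.closure_induction with
  | mem f hf =>
    obtain ⟨c, a, m, hc, ha, -, rfl⟩ := hf
    exact fun x hx y hy hxy =>
      smul_le_smul_of_nonneg_left (antitoneOn_truncPowTerm hθ₀ ha hx hy hxy) hc
  | zero => exact antitoneOn_const
  | add f g _ _ hf hg => exact hf.add hg

lemma convexOn_of_mem_truncPowCone (hθ₀ : 0 ≤ θ) (hθ₁ : θ ≤ 1) (hf : f ∈ truncPowCone θ N) :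
    ConvexOn ℝ (Ioi 0) f := by
  induction hf using AddSubmonoid.closure_induction with
  | mem f hf =>
    obtain ⟨c, a, m, hc, ha, -, rfl⟩ := hf
    exact (convexOn_truncPowTerm hθ₀ hθ₁ ha).smul hc
  | zero => exact convexOn_const 0 (convex_Ioi 0)
  | add f g _ _ hf hg => exact hf.add hg

lemma truncPowTerm_mem_truncPowCone {c a : ℝ} {m : ℕ} (hc : 0 ≤ c) (ha : a ≤ 0) (hm : N ≤ m) :
    c • truncPowTerm θ a m ∈ truncPowCone θ N :=
  AddSubmonoid.subset_closure ⟨c, a, m, hc, ha, hm, rfl⟩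

/-- `-d/dx (x ^ a * q ^ m) = (-a) * x ^ (a - 1) * q ^ m + m * θ * x ^ (a + θ - 1) * q ^ (m - 1)`
for `q = (1 - x ^ θ)₊`, and `θ ≤ 1` keeps `a + θ - 1 ≤ 0`. -/
lemma exists_hasDerivAt_of_mem_truncPowCone (hθ₀ : 0 ≤ θ) (hθ₁ : θ ≤ 1) (hN : 2 ≤ N)
    (hf : f ∈ truncPowCone θ N) :
    ∃ g ∈ truncPowCone θ (N - 1), ∀ x ∈ Ioi (0 : ℝ), HasDerivAt f (-g x) x := by
  induction hf using AddSubmonoid.closure_induction with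
  | mem f hf =>
    obtain ⟨c, a, m, hc, ha, hm, rfl⟩ := hf
    refine ⟨(c * -a) • truncPowTerm θ (a - 1) m
      + (c * (m * θ)) • truncPowTerm θ (a + θ - 1) (m - 1), add_mem ?_ ?_, fun x hx => ?_⟩
    · exact truncPowTerm_mem_truncPowCone (by nlinarith) (by linarith) (by omega)
    · exact truncPowTerm_mem_truncPowCone (by positivity) (by linarith) (by omega)
    · refine ((hasDerivAt_truncPowTerm (by omega) hx).const_mul c).congr_deriv ?_
      simp only [Pi.add_apply, Pi.smul_apply, smul_eq_mul]
      ring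
  | zero => exact ⟨0, zero_mem _, fun x _ => by simp⟩
  | add f₁ f₂ _ _ hf₁ hf₂ =>
    obtain ⟨g₁, hg₁, hd₁⟩ := hf₁
    obtain ⟨g₂, hg₂, hd₂⟩ := hf₂
    refine ⟨g₁ + g₂, add_mem hg₁ hg₂, fun x hx => ?_⟩
    simpa [neg_add_rev, add_comm] using (hd₁ x hx).add (hd₂ x hx)

end truncPowCone

lemma exists_mem_truncPowCone_eqOn_iteratedDerivWithin {θ : ℝ} (hθ₀ : 0 ≤ θ) (hθ₁ : θ ≤ 1)
    {d : ℕ} {φ : ℝ → ℝ} (hφ : ∀ x : ℝ, 0 < x → φ x = max (1 - x ^ θ) 0 ^ (d - 1)) :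
    ∀ k ≤ d - 2, ∃ f ∈ truncPowCone θ (d - 1 - k),
      EqOn (iteratedDerivWithin k φ (Ioi 0)) ((-1 : ℝ) ^ k • f) (Ioi 0) := by
  intro k hk
  induction k with
  | zero =>
    refine ⟨(1 : ℝ) • truncPowTerm θ 0 (d - 1),
      truncPowTerm_mem_truncPowCone zero_le_one le_rfl le_rfl, fun x hx => ?_⟩
    simp [truncPowTerm, hφ x hx]
  | succ k ih =>
    obtain ⟨f, hf, hφf⟩ := ih (by omega)
    obtain ⟨g, hg, hfg⟩ := exists_hasDerivAt_of_mem_truncPowCone hθ₀ hθ₁ (by omega) hf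
    refine ⟨g, by rwa [show d - 1 - (k + 1) = d - 1 - k - 1 by omega], fun x hx => ?_⟩
    rw [iteratedDerivWithin_succ, derivWithin_congr hφf (hφf hx)]
    refine (((hfg x hx).const_smul ((-1 : ℝ) ^ k)).hasDerivWithinAt.derivWithin
      (uniqueDiffOn_Ioi 0 x hx)).trans ?_
    simp [pow_succ]

theorem outer_power_generator_d_monotone_general
    (d : ℕ) (p θ : ℝ) (hp : 1 ≤ p) (hθ : θ = 1 / p)
    (φ : ℝ → ℝ) (hφ : ∀ x : ℝ, 0 < x → φ x = (max (1 - x ^ θ) 0) ^ (d - 1)) :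
    (∀ k : ℕ, k < d - 2 →
      DifferentiableOn ℝ (iteratedDerivWithin k φ (Set.Ioi 0)) (Set.Ioi 0)) ∧
    (∀ k : ℕ, k ≤ d - 2 →
      (∀ x ∈ Set.Ioi (0 : ℝ), 0 ≤ (-1 : ℝ) ^ k * iteratedDerivWithin k φ (Set.Ioi 0) x) ∧
      AntitoneOn (fun x => (-1 : ℝ) ^ k * iteratedDerivWithin k φ (Set.Ioi 0) x)
        (Set.Ioi 0) ∧
      ConvexOn ℝ (Set.Ioi 0)
        (fun x => (-1 : ℝ) ^ k * iteratedDerivWithin k φ (Set.Ioi 0) x)) := by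
  have hθ₀ : 0 ≤ θ := by rw [hθ]; positivity
  have hθ₁ : θ ≤ 1 := by rw [hθ]; exact div_le_one_of_le₀ hp (by linarith)
  have hderiv := exists_mem_truncPowCone_eqOn_iteratedDerivWithin hθ₀ hθ₁ hφ
  refine ⟨fun k hk => ?_, fun k hk => ?_⟩
  · obtain ⟨f, hf, hφf⟩ := hderiv k hk.le
    obtain ⟨g, -, hfg⟩ := exists_hasDerivAt_of_mem_truncPowCone hθ₀ hθ₁ (by omega) hf
    refine DifferentiableOn.congr (fun x hx => ?_) hφf
    exact ((hfg x hx).differentiableAt.const_smul _).differentiableWithinAt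
  · obtain ⟨f, hf, hφf⟩ := hderiv k hk
    have hsign : EqOn f (fun x => (-1 : ℝ) ^ k * iteratedDerivWithin k φ (Ioi 0) x) (Ioi 0) :=
      fun x hx => by simp [hφf hx, ← mul_assoc, ← mul_pow]
    exact ⟨fun x hx => (nonneg_of_mem_truncPowCone hf (le_of_lt hx)).trans_eq (hsign hx),
      (antitoneOn_of_mem_truncPowCone hθ₀ hf).congr hsign,
      (convexOn_of_mem_truncPowCone hθ₀ hθ₁ hf).congr hsign⟩

/-- The function `φ(x) = (1 - x^θ)_+^{d-1}` is `d`-monotone on `(0,∞)`: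
it is `(d-2)`-times differentiable there, and for every `k = 0,…,d-2` the function
`x ↦ (-1)^k φ^{(k)}(x)` is nonnegative, nonincreasing and convex on `(0,∞)`. -/
theorem outer_power_generator_d_monotone
    (d : ℕ) (hd : 2 ≤ d) (p θ : ℝ) (hp : 1 ≤ p) (hθ : θ = 1 / p)
    (φ : ℝ → ℝ) (hφ : ∀ x : ℝ, 0 < x → φ x = (max (1 - x ^ θ) 0) ^ (d - 1)) :
    (∀ k : ℕ, k < d - 2 →
      DifferentiableOn ℝ (iteratedDerivWithin k φ (Set.Ioi 0)) (Set.Ioi 0)) ∧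
    (∀ k : ℕ, k ≤ d - 2 →
      (∀ x ∈ Set.Ioi (0 : ℝ), 0 ≤ (-1 : ℝ) ^ k * iteratedDerivWithin k φ (Set.Ioi 0) x) ∧
      AntitoneOn (fun x => (-1 : ℝ) ^ k * iteratedDerivWithin k φ (Set.Ioi 0) x)
        (Set.Ioi 0) ∧
      ConvexOn ℝ (Set.Ioi 0)
        (fun x => (-1 : ℝ) ^ k * iteratedDerivWithin k φ (Set.Ioi 0) x)) :=
  outer_power_generator_d_monotone_general d p θ hp hθ φ hφ
end

section
/- Fix an integer d ≥ 2 and a real number p ≥ 1, and set θ = 1/p. Let V be a random variable with values in (0,1] such that E[(1 − c/V^p)_+^{d-1}] = (1 − c^θ)_+^{d-1} for all c ≥ 0, and let U = (U_1,…,U_d) be a random vector with values in [0,1]^d, independent of V, whose survival function is P(U_1 > u_1, …, U_d > u_d) = (1 − (u_1 + … + u_d))_+^{d-1} for all u ∈ [0,∞)^d. Then the random vector Z = V·(U_1^θ, …, U_d^θ) satisfies P(Z_1 > z_1, …, Z_d > z_d) = (1 − ‖z‖_p)_+^{d-1} for all z ∈ [0,∞)^d, where ‖z‖_p = (z_1^p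 + … + z_d^p)^{1/p}. -/
/-!
Write `θ = 1/p`. Conditionally on `V = v > 0`, the event `z_i < v U_i^θ` is `(z_i/v)^p < U_i`, so
by the survival function of `U` it has probability `(1 - ‖z‖_p^p / v^p)_+^{d-1}`. Integrating over
the law of `V` (independence makes the joint law a product measure) turns this into the assumed
identity for `V` at `c = ‖z‖_p^p`, whose right-hand side is `(1 - ‖z‖_p)_+^{d-1}`.
-/

open MeasureTheory ProbabilityTheory

lemma lt_mul_rpow_inv_iff_div_rpow_lt {v u z p : ℝ} (hv : 0 < v) (hu : 0 ≤ u) (hz : 0 ≤ z)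
    (hp : 0 < p) : z < v * u ^ p⁻¹ ↔ (z / v) ^ p < u := by
  rw [← div_lt_iff₀' hv, Real.lt_rpow_inv_iff_of_pos (div_nonneg hz hv.le) hu hp]

lemma max_one_sub_pow_mem_Icc {x : ℝ} (hx : 0 ≤ x) (n : ℕ) :
    max (1 - x) 0 ^ n ∈ Set.Icc (0 : ℝ) 1 :=
  ⟨by positivity, pow_le_one₀ (le_max_right _ _) (max_le (by linarith) zero_le_one)⟩

lemma sum_div_rpow {ι : Type*} (s : Finset ι) {z : ι → ℝ} (hz : ∀ i, 0 ≤ z i) {v : ℝ}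
    (hv : 0 ≤ v) (p : ℝ) : ∑ i ∈ s, (z i / v) ^ p = (∑ i ∈ s, z i ^ p) / v ^ p := by
  rw [Finset.sum_div]
  exact Finset.sum_congr rfl fun i _ => Real.div_rpow (hz i) hv p

lemma ProbabilityTheory.IndepFun.measure_preimage_eq_lintegral {Ω α β : Type*}
    [MeasurableSpace Ω] [MeasurableSpace α] [MeasurableSpace β] {P : Measure Ω}
    [IsFiniteMeasure P] {X : Ω → α} {Y : Ω → β} (hXY : IndepFun X Y P)
    (hX : Measurable X) (hY : Measurable Y) {S : Set (α × β)} (hS : MeasurableSet S) :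
    P ((fun ω => (X ω, Y ω)) ⁻¹' S) = ∫⁻ ω, P.map Y (Prod.mk (X ω) ⁻¹' S) ∂P := by
  rw [← Measure.map_apply (hX.prodMk hY) hS,
    (indepFun_iff_map_prod_eq_prod_map_map hX.aemeasurable hY.aemeasurable).mp hXY,
    Measure.prod_apply hS, lintegral_map (measurable_measure_prodMk_left hS) hX]

theorem survival_function_of_VU_general
    (d : ℕ) (p θ : ℝ) (hp : 1 ≤ p) (hθ : θ = 1 / p)
    {Ω : Type*} [MeasurableSpace Ω] (P : Measure Ω) [IsProbabilityMeasure P]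
    (V : Ω → ℝ) (U : Ω → Fin d → ℝ)
    (hVmeas : Measurable V) (hUmeas : Measurable U)
    (hVrange : ∀ ω, V ω ∈ Set.Ioc (0 : ℝ) 1)
    (hUrange : ∀ ω i, U ω i ∈ Set.Icc (0 : ℝ) 1)
    (hindep : IndepFun V U P)
    (hV : ∀ c : ℝ, 0 ≤ c →
      ∫ ω, (max (1 - c / (V ω) ^ p) 0) ^ (d - 1) ∂P = (max (1 - c ^ θ) 0) ^ (d - 1))
    (hU : ∀ u : Fin d → ℝ, (∀ i, 0 ≤ u i) →
      P {ω | ∀ i, u i < U ω i} = ENNReal.ofReal ((max (1 - ∑ i, u i) 0) ^ (d - 1))) :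
    ∀ z : Fin d → ℝ, (∀ i, 0 ≤ z i) →
      P {ω | ∀ i, z i < V ω * (U ω i) ^ θ}
        = ENNReal.ofReal ((max (1 - (∑ i, (z i) ^ p) ^ θ) 0) ^ (d - 1)) := by
  intro z hz
  rw [one_div] at hθ
  subst hθ
  have hp0 : 0 < p := zero_lt_one.trans_le hp
  set c := ∑ i, z i ^ p
  have hc : 0 ≤ c := Finset.sum_nonneg fun i _ => Real.rpow_nonneg (hz i) p
  set g : ℝ → ℝ := fun v => max (1 - c / v ^ p) 0 ^ (d - 1)
  have hg : ∀ ω, g (V ω) ∈ Set.Icc (0 : ℝ) 1 := fun ω =>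
    max_one_sub_pow_mem_Icc (div_nonneg hc (Real.rpow_nonneg (hVrange ω).1.le p)) _
  set S : Set (ℝ × (Fin d → ℝ)) := {x | ∀ i, z i < x.1 * x.2 i ^ p⁻¹}
  have hS : MeasurableSet S := by
    simp only [S, Set.ofPred_forall]
    exact MeasurableSet.iInter fun i => measurableSet_lt (by fun_prop) (by fun_prop)
  have hslice : ∀ v ∈ Set.Ioc (0 : ℝ) 1, P.map U (Prod.mk v ⁻¹' S) = ENNReal.ofReal (g v) := by
    intro v hv
    have hevent : U ⁻¹' (Prod.mk v ⁻¹' S) = {ω | ∀ i, (z i / v) ^ p < U ω i} := by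
      ext ω
      exact forall_congr' fun i =>
        lt_mul_rpow_inv_iff_div_rpow_lt hv.1 (hUrange ω i).1 (hz i) hp0
    rw [Measure.map_apply hUmeas (hS.preimage measurable_prodMk_left), hevent,
      hU _ fun i => Real.rpow_nonneg (div_nonneg (hz i) hv.1.le) p,
      sum_div_rpow _ hz hv.1.le]
  have hgV : Measurable fun ω => g (V ω) := by simp only [g]; fun_prop
  have hint : Integrable (fun ω => g (V ω)) P :=
    Integrable.of_bound hgV.aestronglyMeasurable 1 (Filter.Eventually.of_forall fun ω => by
      rw [Real.norm_of_nonneg (hg ω).1]; exact (hg ω).2)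
  calc P {ω | ∀ i, z i < V ω * U ω i ^ p⁻¹}
      = ∫⁻ ω, P.map U (Prod.mk (V ω) ⁻¹' S) ∂P :=
        hindep.measure_preimage_eq_lintegral hVmeas hUmeas hS
    _ = ∫⁻ ω, ENNReal.ofReal (g (V ω)) ∂P :=
        lintegral_congr fun ω => hslice (V ω) (hVrange ω)
    _ = ENNReal.ofReal (∫ ω, g (V ω) ∂P) :=
        (ofReal_integral_eq_lintegral_ofReal hint
          (Filter.Eventually.of_forall fun ω => (hg ω).1)).symm
    _ = _ := by rw [hV c hc]

/-- If `V` has values in `(0,1]` with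
`E[(1 − c/V^p)_+^{d-1}] = (1 − c^θ)_+^{d-1}` for all `c ≥ 0`, and `U` is an independent
random vector in `[0,1]^d` with survival function `(1 − (u_1+…+u_d))_+^{d-1}`, then
`Z = V·U^θ` (componentwise) has survival function `(1 − ‖z‖_p)_+^{d-1}`. -/
theorem survival_function_of_VU
    (d : ℕ) (hd : 2 ≤ d) (p θ : ℝ) (hp : 1 ≤ p) (hθ : θ = 1 / p)
    {Ω : Type*} [MeasurableSpace Ω] (P : Measure Ω) [IsProbabilityMeasure P]
    (V : Ω → ℝ) (U : Ω → Fin d → ℝ)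
    (hVmeas : Measurable V) (hUmeas : Measurable U)
    (hVrange : ∀ ω, V ω ∈ Set.Ioc (0 : ℝ) 1)
    (hUrange : ∀ ω i, U ω i ∈ Set.Icc (0 : ℝ) 1)
    (hindep : IndepFun V U P)
    (hV : ∀ c : ℝ, 0 ≤ c →
      ∫ ω, (max (1 - c / (V ω) ^ p) 0) ^ (d - 1) ∂P = (max (1 - c ^ θ) 0) ^ (d - 1))
    (hU : ∀ u : Fin d → ℝ, (∀ i, 0 ≤ u i) →
      P {ω | ∀ i, u i < U ω i} = ENNReal.ofReal ((max (1 - ∑ i, u i) 0) ^ (d - 1))) :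
    ∀ z : Fin d → ℝ, (∀ i, 0 ≤ z i) →
      P {ω | ∀ i, z i < V ω * (U ω i) ^ θ}
        = ENNReal.ofReal ((max (1 - (∑ i, (z i) ^ p) ^ θ) 0) ^ (d - 1)) :=
  survival_function_of_VU_general d p θ hp hθ P V U hVmeas hUmeas hVrange hUrange hindep hV hU
end

section
/- Fix an integer d ≥ 2. Let ν be a measure on (0,∞) such that ν((t,∞)) < ∞ for every t > 0 and ν((0,∞)) = ∞. Define φ_ν(t) = ∫_{(0,∞)} (1 − t/r)_+^{d-1} dν(r) for t > 0. Then: (i) φ_ν(t) < ∞ for every t > 0; (ii) φ_ν is d-monotone on (0,∞), i.e., φ_ν is (d-2)-times differentiable on (0,∞) and (-1)^k φ_ν^{(k)} is nonnegative, nonincreasing and convex for every k = 0,…,d-2; (iii) φ_ν(t) → 0 as t → ∞; and (iv) φ_ν(t) → ∞ as t ↓ 0. -/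
/-!
Differentiating under the integral sign gives, for `k ≤ d - 2` and `t > 0`,
`(-1)^k φ^(k)(t) = (d-1)(d-2)⋯(d-k) ∫ r^(-k) (1 - t/r)_+^(d-1-k) dν(r)`: the `k`-th `t`-derivative
of the kernel vanishes for `r ≤ t` and is bounded by a multiple of `t^(-k)`, so near `t₀` it is
dominated by a multiple of the indicator of `(t₀/2, ∞)`, which is `ν`-integrable. Each of these
integrands is nonnegative, nonincreasing and convex in `t`, and integration preserves all three.
As `t → ∞` the kernel tends to `0` under the dominating function `1_(1,∞)`, while as `t ↓ 0`,
`φ(t) ≥ 2^(1-d) ν((2t, ∞)) → ν((0, ∞)) = ∞`.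
-/

open MeasureTheory Set Filter Topology

theorem hasDerivAt_posPart_pow (m : ℕ) (x : ℝ) :
    HasDerivAt (fun y : ℝ => max y 0 ^ (m + 2)) ((m + 2) * max x 0 ^ (m + 1)) x := by
  rcases lt_trichotomy x 0 with hx | rfl | hx
  · have hzero : (fun y : ℝ => max y 0 ^ (m + 2)) =ᶠ[𝓝 x] fun _ => 0 := by
      filter_upwards [Iio_mem_nhds hx] with y hy
      simp [max_eq_right (le_of_lt (mem_Iio.1 hy))]
    simpa [max_eq_right hx.le] using (hasDerivAt_const x (0 : ℝ)).congr_of_eventuallyEq hzero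
  · have hleft : HasDerivWithinAt (fun y : ℝ => max y 0 ^ (m + 2)) 0 (Iic 0) 0 :=
      (hasDerivWithinAt_const 0 _ 0).congr (fun y hy => by simp [max_eq_right (mem_Iic.1 hy)])
        (by simp)
    have hright : HasDerivWithinAt (fun y : ℝ => max y 0 ^ (m + 2)) 0 (Ici 0) 0 := by
      have := ((hasDerivAt_pow (m + 2) (0 : ℝ)).hasDerivWithinAt (s := Ici 0)).congr
        (f₁ := fun y : ℝ => max y 0 ^ (m + 2)) (fun y hy => by simp [max_eq_left (mem_Ici.1 hy)])
        (by simp)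
      simpa using this
    simpa [Iic_union_Ici] using hleft.union hright
  · have hpow : (fun y : ℝ => max y 0 ^ (m + 2)) =ᶠ[𝓝 x] fun y => y ^ (m + 2) := by
      filter_upwards [Ioi_mem_nhds hx] with y hy
      rw [max_eq_left (le_of_lt hy)]
    simpa [max_eq_left hx.le] using (hasDerivAt_pow (m + 2) x).congr_of_eventuallyEq hpow

theorem monotone_posPart_pow (m : ℕ) : Monotone fun u : ℝ => max u 0 ^ m :=
  fun _ _ huv => pow_le_pow_left₀ (le_max_right _ _) (max_le_max_right 0 huv) m

theorem convexOn_posPart_pow (m : ℕ) : ConvexOn ℝ univ fun u : ℝ => max u 0 ^ m := by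
  have hpos : ConvexOn ℝ univ fun u : ℝ => max u 0 :=
    (convexOn_id convex_univ).sup (convexOn_const 0 convex_univ)
  have hrange : (fun u : ℝ => max u 0) '' univ = Ici 0 := by
    ext y
    simp only [image_univ, mem_range, mem_Ici]
    exact ⟨fun ⟨u, hu⟩ => hu ▸ le_max_right u 0, fun hy => ⟨y, max_eq_left hy⟩⟩
  refine ConvexOn.comp (g := fun x : ℝ => x ^ m) ?_ hpos ?_ <;> rw [hrange]
  · exact convexOn_pow m
  · exact pow_left_monotoneOn

theorem ConvexOn.comp_of_monotone {E : Type*} [AddCommMonoid E] [Module ℝ E] {s : Set E}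
    {f : E → ℝ} {g : ℝ → ℝ} (hg : ConvexOn ℝ univ g) (hg' : Monotone g) (hf : ConvexOn ℝ s f) :
    ConvexOn ℝ s (g ∘ f) :=
  ⟨hf.1, fun _ hx _ hy _ _ ha hb hab =>
    (hg' (hf.2 hx hy ha hb hab)).trans (hg.2 trivial trivial ha hb hab)⟩

theorem iteratedDerivWithin_eqOn_of_hasDerivAt {𝕜 F : Type*} [NontriviallyNormedField 𝕜]
    [NormedAddCommGroup F] [NormedSpace 𝕜 F] {f : 𝕜 → F} {g : ℕ → 𝕜 → F} {s : Set 𝕜}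
    (hs : IsOpen s) {N : ℕ} (hf : EqOn f (g 0) s)
    (hg : ∀ k < N, ∀ x ∈ s, HasDerivAt (g k) (g (k + 1) x) x) :
    ∀ k ≤ N, EqOn (iteratedDerivWithin k f s) (g k) s := by
  intro k
  induction k with
  | zero => intro _; simpa using hf
  | succ k ih =>
    intro hk x hx
    have hloc : iteratedDerivWithin k f s =ᶠ[𝓝 x] g k :=
      eventuallyEq_of_mem (hs.mem_nhds hx) (ih (by omega))
    rw [iteratedDerivWithin_succ, derivWithin_of_isOpen hs hx, hloc.deriv_eq]
    exact (hg k (by omega) x hx).deriv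

section IntegralOfFamily

variable {α E : Type*} [MeasurableSpace α] {μ : Measure α} {F : E → α → ℝ} {s : Set E}

theorem integral_convexOn [AddCommGroup E] [Module ℝ E] (hs : Convex ℝ s)
    (hint : ∀ x ∈ s, Integrable (F x) μ) (hF : ∀ᵐ a ∂μ, ConvexOn ℝ s (F · a)) :
    ConvexOn ℝ s fun x => ∫ a, F x a ∂μ := by
  refine ⟨hs, fun x hx y hy a b ha hb hab => ?_⟩
  have hcomb : Integrable (fun r => a * F x r + b * F y r) μ :=
    ((hint x hx).const_mul a).add ((hint y hy).const_mul b)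
  calc ∫ r, F (a • x + b • y) r ∂μ ≤ ∫ r, (a * F x r + b * F y r) ∂μ := by
        refine integral_mono_ae (hint _ (hs hx hy ha hb hab)) hcomb ?_
        filter_upwards [hF] with r hr using hr.2 hx hy ha hb hab
    _ = a • ∫ r, F x r ∂μ + b • ∫ r, F y r ∂μ := by
        rw [integral_add ((hint x hx).const_mul a) ((hint y hy).const_mul b),
          integral_const_mul, integral_const_mul, smul_eq_mul, smul_eq_mul]

theorem integral_antitoneOn [Preorder E] (hint : ∀ x ∈ s, Integrable (F x) μ)
    (hF : ∀ᵐ a ∂μ, AntitoneOn (F · a) s) : AntitoneOn (fun x => ∫ a, F x a ∂μ) s :=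
  fun x hx y hy hxy => integral_mono_ae (hint y hy) (hint x hx) <| by
    filter_upwards [hF] with r hr using hr hx hy hxy

end IntegralOfFamily

theorem tendsto_measure_Ioi_nhdsGT (μ : Measure ℝ) (a : ℝ) :
    Tendsto (fun s => μ (Ioi s)) (𝓝[>] a) (𝓝 (μ (Ioi a))) := by
  have : (atBot : Filter (Ioi a)).IsCountablyGenerated := by
    rw [← comap_coe_Ioi_nhdsGT a]
    infer_instance
  have hunion : Ioi a = ⋃ s : Ioi a, Ioi (s : ℝ) := by
    ext x
    simp only [mem_Ioi, mem_iUnion, Subtype.exists, exists_prop]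
    exact ⟨fun hx => exists_between hx, fun ⟨s, has, hsx⟩ => has.trans hsx⟩
  have hlim := tendsto_measure_iUnion_atBot (μ := μ)
    (fun _ _ hst => Ioi_subset_Ioi hst : Antitone fun s : Ioi a => Ioi (s : ℝ))
  rw [← hunion] at hlim
  rwa [← map_coe_Ioi_atBot a, tendsto_map'_iff]

/-- `(-1) ^ k` times the `k`-th derivative of `t ↦ (1 - t / r)_+ ^ n`. -/
noncomputable def truncPowDeriv (n k : ℕ) (t r : ℝ) : ℝ :=
  n.descFactorial k * r⁻¹ ^ k * max (1 - t / r) 0 ^ (n - k)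

noncomputable def truncPowIntegral (ν : Measure ℝ) (n k : ℕ) (t : ℝ) : ℝ :=
  ∫ r in Ioi 0, truncPowDeriv n k t r ∂ν

section Kernel

variable {n k : ℕ} {a t r : ℝ}

@[simp]
theorem truncPowDeriv_zero : truncPowDeriv n 0 t r = max (1 - t / r) 0 ^ n := by
  simp [truncPowDeriv]

theorem measurable_truncPowDeriv (n k : ℕ) (t : ℝ) : Measurable (truncPowDeriv n k t) := by
  unfold truncPowDeriv
  fun_prop

theorem truncPowDeriv_nonneg (hr : 0 ≤ r) : 0 ≤ truncPowDeriv n k t r := by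
  unfold truncPowDeriv
  positivity

theorem truncPowDeriv_eq_zero (hk : k < n) (hr : 0 < r) (hrt : r ≤ t) :
    truncPowDeriv n k t r = 0 := by
  have hmax : max (1 - t / r) 0 = 0 := max_eq_right (by linarith [(one_le_div hr).2 hrt])
  rw [truncPowDeriv, hmax, zero_pow (by omega), mul_zero]

theorem norm_truncPowDeriv_le (hk : k < n) (ha : 0 < a) (hat : a ≤ t) (hr : 0 < r) :
    ‖truncPowDeriv n k t r‖ ≤ (Ioi a).indicator (fun _ => n.descFactorial k * a⁻¹ ^ k) r := by
  rw [Real.norm_of_nonneg (truncPowDeriv_nonneg hr.le)]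
  rcases le_or_gt r t with hrt | htr
  · rw [truncPowDeriv_eq_zero hk hr hrt]
    exact indicator_nonneg (fun _ _ => by positivity) r
  · have har : a < r := hat.trans_lt htr
    rw [indicator_of_mem (mem_Ioi.2 har)]
    have hmax : max (1 - t / r) 0 ≤ 1 :=
      max_le (by linarith [div_pos (ha.trans_le hat) hr]) zero_le_one
    calc truncPowDeriv n k t r ≤ n.descFactorial k * r⁻¹ ^ k * 1 := by
          unfold truncPowDeriv
          gcongr
          exact pow_le_one₀ (le_max_right _ _) hmax
      _ ≤ n.descFactorial k * a⁻¹ ^ k := by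
          rw [mul_one]
          gcongr

theorem indicator_le_truncPowDeriv_zero (hr : 0 < r) :
    (Ioi (2 * t)).indicator (fun _ => (2 : ℝ)⁻¹ ^ n) r ≤ truncPowDeriv n 0 t r := by
  rcases le_or_gt r (2 * t) with hr2t | h2tr
  · rw [indicator_of_notMem (by simpa using hr2t)]
    exact truncPowDeriv_nonneg hr.le
  · rw [indicator_of_mem (mem_Ioi.2 h2tr), truncPowDeriv_zero]
    have : t / r ≤ 2⁻¹ := by rw [div_le_iff₀ hr]; linarith
    exact pow_le_pow_left₀ (by norm_num) (le_max_of_le_left (by linarith)) n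

theorem hasDerivAt_truncPowDeriv (hk : k + 2 ≤ n) (t r : ℝ) :
    HasDerivAt (truncPowDeriv n k · r) (-truncPowDeriv n (k + 1) t r) t := by
  obtain ⟨m, hm⟩ : ∃ m, n - k = m + 2 := ⟨n - k - 2, by omega⟩
  have hinner : HasDerivAt (fun s : ℝ => 1 - s / r) (-r⁻¹) t := by
    simpa using ((hasDerivAt_id t).div_const r).const_sub 1
  have := ((hasDerivAt_posPart_pow m (1 - t / r)).comp t hinner).const_mul
    ((n.descFactorial k : ℝ) * r⁻¹ ^ k)
  unfold truncPowDeriv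
  rw [Nat.descFactorial_succ, hm, show n - (k + 1) = m + 1 by omega]
  exact this.congr_deriv (by push_cast; ring)

theorem antitone_truncPowDeriv (hr : 0 < r) : Antitone (truncPowDeriv n k · r) :=
  fun _ _ hst => mul_le_mul_of_nonneg_left (monotone_posPart_pow _ (by gcongr)) (by positivity)

theorem convexOn_truncPowDeriv (hr : 0 ≤ r) : ConvexOn ℝ univ (truncPowDeriv n k · r) := by
  have hinner : ConvexOn ℝ univ fun s : ℝ => 1 - s / r := by
    refine ⟨convex_univ, fun x _ y _ a b _ _ hab => le_of_eq ?_⟩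
    simp only [smul_eq_mul, div_eq_mul_inv]
    linear_combination -hab
  have hcoef : (0 : ℝ) ≤ n.descFactorial k * r⁻¹ ^ k := by positivity
  exact ((convexOn_posPart_pow (n - k)).comp_of_monotone (monotone_posPart_pow _) hinner).smul
    hcoef

end Kernel

section Integral

variable {ν : Measure ℝ} {n k : ℕ} {t : ℝ}

theorem truncPowIntegral_nonneg : 0 ≤ truncPowIntegral ν n k t :=
  setIntegral_nonneg measurableSet_Ioi fun _ hr => truncPowDeriv_nonneg (le_of_lt hr)

theorem toReal_lintegral_eq_truncPowIntegral (ν : Measure ℝ) (n : ℕ) (t : ℝ) :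
    (∫⁻ r in Ioi 0, ENNReal.ofReal (max (1 - t / r) 0 ^ n) ∂ν).toReal =
      truncPowIntegral ν n 0 t := by
  rw [truncPowIntegral, integral_eq_lintegral_of_nonneg_ae
    (Eventually.of_forall fun _ => by simp only [truncPowDeriv_zero]; positivity)
    (measurable_truncPowDeriv n 0 t).aestronglyMeasurable]
  simp only [truncPowDeriv_zero]

variable (hfin : ∀ t, 0 < t → ν (Ioi t) < ⊤)
include hfin

theorem integrable_indicator_Ioi (C : ℝ) {a : ℝ} (ha : 0 < a) :
    Integrable ((Ioi a).indicator fun _ => C) (ν.restrict (Ioi 0)) := by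
  rw [integrable_indicator_iff measurableSet_Ioi]
  exact integrableOn_const ((Measure.restrict_apply_le _ _).trans_lt (hfin a ha)).ne

theorem integrable_truncPowDeriv (hk : k < n) (ht : 0 < t) :
    Integrable (truncPowDeriv n k t) (ν.restrict (Ioi 0)) := by
  refine (integrable_indicator_Ioi hfin ((n.descFactorial k : ℝ) * t⁻¹ ^ k) ht).mono'
    (measurable_truncPowDeriv n k t).aestronglyMeasurable ?_
  filter_upwards [ae_restrict_mem measurableSet_Ioi] with r hr
  exact norm_truncPowDeriv_le hk ht le_rfl hr

theorem hasDerivAt_truncPowIntegral (hk : k + 2 ≤ n) (ht : 0 < t) :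
    HasDerivAt (truncPowIntegral ν n k) (-truncPowIntegral ν n (k + 1) t) t := by
  have hball : ∀ s ∈ Metric.ball t (t / 2), t / 2 ≤ s := fun s hs => by
    linarith [(abs_lt.1 (Real.dist_eq s t ▸ Metric.mem_ball.1 hs)).1]
  have h := hasDerivAt_integral_of_dominated_loc_of_deriv_le (μ := ν.restrict (Ioi 0))
    (F' := fun s r => -truncPowDeriv n (k + 1) s r)
    (Metric.ball_mem_nhds t (half_pos ht))
    (Eventually.of_forall fun s => (measurable_truncPowDeriv n k s).aestronglyMeasurable)
    (integrable_truncPowDeriv hfin (by omega) ht)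
    (measurable_truncPowDeriv n (k + 1) t).neg.aestronglyMeasurable
    (by
      filter_upwards [ae_restrict_mem measurableSet_Ioi] with r hr s hs
      rw [norm_neg]
      exact norm_truncPowDeriv_le (by omega) (half_pos ht) (hball s hs) hr)
    (integrable_indicator_Ioi hfin _ (half_pos ht))
    (Eventually.of_forall fun r s _ => hasDerivAt_truncPowDeriv hk s r)
  have hderiv := h.2
  rw [integral_neg] at hderiv
  exact hderiv

theorem antitoneOn_truncPowIntegral (hk : k < n) :
    AntitoneOn (truncPowIntegral ν n k) (Ioi 0) :=
  integral_antitoneOn (fun _ ht => integrable_truncPowDeriv hfin hk ht) <| by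
    filter_upwards [ae_restrict_mem measurableSet_Ioi] with r hr
    exact (antitone_truncPowDeriv hr).antitoneOn _

theorem convexOn_truncPowIntegral (hk : k < n) :
    ConvexOn ℝ (Ioi 0) (truncPowIntegral ν n k) :=
  integral_convexOn (convex_Ioi 0) (fun _ ht => integrable_truncPowDeriv hfin hk ht) <| by
    filter_upwards [ae_restrict_mem measurableSet_Ioi] with r hr
    exact (convexOn_truncPowDeriv (le_of_lt hr)).subset (subset_univ _) (convex_Ioi 0)

theorem tendsto_truncPowIntegral_atTop (hn : 0 < n) :
    Tendsto (truncPowIntegral ν n 0) atTop (𝓝 0) := by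
  have h := tendsto_integral_filter_of_dominated_convergence (μ := ν.restrict (Ioi 0))
    (F := fun t r => truncPowDeriv n 0 t r) (f := 0) _
    (Eventually.of_forall fun t => (measurable_truncPowDeriv n 0 t).aestronglyMeasurable)
    (by
      filter_upwards [eventually_ge_atTop 1] with t ht
      filter_upwards [ae_restrict_mem measurableSet_Ioi] with r hr
      exact norm_truncPowDeriv_le hn one_pos ht hr)
    (integrable_indicator_Ioi hfin _ one_pos)
    (by
      filter_upwards [ae_restrict_mem measurableSet_Ioi] with r hr
      refine tendsto_const_nhds.congr' ?_
      filter_upwards [eventually_ge_atTop r] with t hrt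
      exact (truncPowDeriv_eq_zero hn hr hrt).symm)
  rw [Pi.zero_def, integral_zero] at h
  exact h

theorem measureReal_Ioi_le_truncPowIntegral (hn : 0 < n) (ht : 0 < t) :
    (2 : ℝ)⁻¹ ^ n * ν.real (Ioi (2 * t)) ≤ truncPowIntegral ν n 0 t := by
  have h2t : Ioi (2 * t) ⊆ Ioi 0 := Ioi_subset_Ioi (by positivity)
  calc (2 : ℝ)⁻¹ ^ n * ν.real (Ioi (2 * t))
      = ∫ r in Ioi 0, (Ioi (2 * t)).indicator (fun _ => (2 : ℝ)⁻¹ ^ n) r ∂ν := by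
        rw [integral_indicator_const _ measurableSet_Ioi, measureReal_restrict_apply
          measurableSet_Ioi, inter_eq_self_of_subset_left h2t, smul_eq_mul, mul_comm]
    _ ≤ truncPowIntegral ν n 0 t := by
        refine integral_mono_ae (integrable_indicator_Ioi hfin _ (by positivity))
          (integrable_truncPowDeriv hfin hn ht) ?_
        filter_upwards [ae_restrict_mem measurableSet_Ioi] with r hr
        exact indicator_le_truncPowDeriv_zero hr

theorem tendsto_measureReal_Ioi_nhdsGT_zero (hinf : ν (Ioi 0) = ⊤) :
    Tendsto (fun s => ν.real (Ioi s)) (𝓝[>] 0) atTop := by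
  rw [← ENNReal.tendsto_ofReal_nhds_top, ← hinf]
  refine (tendsto_measure_Ioi_nhdsGT ν 0).congr' ?_
  filter_upwards [self_mem_nhdsWithin] with s hs
  exact (ENNReal.ofReal_toReal (hfin s hs).ne).symm

theorem tendsto_truncPowIntegral_nhdsGT_zero (hn : 0 < n) (hinf : ν (Ioi 0) = ⊤) :
    Tendsto (truncPowIntegral ν n 0) (𝓝[>] 0) atTop := by
  have hdouble := tendsto_comap (f := fun t : ℝ => 2 * t) (x := 𝓝[>] 0)
  rw [comap_mulLeft_nhdsGT_zero two_pos] at hdouble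
  refine tendsto_atTop_mono' _ ?_
    (((tendsto_measureReal_Ioi_nhdsGT_zero hfin hinf).comp hdouble).const_mul_atTop
      (by positivity : (0 : ℝ) < 2⁻¹ ^ n))
  filter_upwards [self_mem_nhdsWithin] with t ht
  exact measureReal_Ioi_le_truncPowIntegral hfin hn ht

end Integral

theorem generator_of_radon_measure_general
    (d : ℕ) (hd : 2 ≤ d) (ν : Measure ℝ)
    (hfin : ∀ t : ℝ, 0 < t → ν (Set.Ioi t) < ⊤)
    (hinf : ν (Set.Ioi 0) = ⊤)
    (φ : ℝ → ℝ)
    (hφ : ∀ t : ℝ, φ t =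
      (∫⁻ r in Set.Ioi (0 : ℝ), ENNReal.ofReal ((max (1 - t / r) 0) ^ (d - 1)) ∂ν).toReal) :
    (∀ t : ℝ, 0 < t →
      (∫⁻ r in Set.Ioi (0 : ℝ), ENNReal.ofReal ((max (1 - t / r) 0) ^ (d - 1)) ∂ν) < ⊤) ∧
    (∀ k : ℕ, k < d - 2 →
      DifferentiableOn ℝ (iteratedDerivWithin k φ (Set.Ioi 0)) (Set.Ioi 0)) ∧
    (∀ k : ℕ, k ≤ d - 2 →
      (∀ x ∈ Set.Ioi (0 : ℝ), 0 ≤ (-1 : ℝ) ^ k * iteratedDerivWithin k φ (Set.Ioi 0) x) ∧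
      AntitoneOn (fun x => (-1 : ℝ) ^ k * iteratedDerivWithin k φ (Set.Ioi 0) x)
        (Set.Ioi 0) ∧
      ConvexOn ℝ (Set.Ioi 0)
        (fun x => (-1 : ℝ) ^ k * iteratedDerivWithin k φ (Set.Ioi 0) x)) ∧
    Filter.Tendsto φ Filter.atTop (nhds 0) ∧
    Filter.Tendsto φ (nhdsWithin 0 (Set.Ioi 0)) Filter.atTop := by
  have hφ_eq : φ = truncPowIntegral ν (d - 1) 0 :=
    funext fun t => by rw [hφ, toReal_lintegral_eq_truncPowIntegral]
  have hderiv : ∀ k < d - 2, ∀ t ∈ Ioi (0 : ℝ), HasDerivAt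
      (fun s => (-1) ^ k * truncPowIntegral ν (d - 1) k s)
      ((-1) ^ (k + 1) * truncPowIntegral ν (d - 1) (k + 1) t) t := fun k hk t ht =>
    ((hasDerivAt_truncPowIntegral hfin (by omega) ht).const_mul _).congr_deriv (by ring)
  have hiter := iteratedDerivWithin_eqOn_of_hasDerivAt (f := φ)
    (g := fun k t => (-1) ^ k * truncPowIntegral ν (d - 1) k t) isOpen_Ioi
    (fun t _ => by simp [hφ_eq]) hderiv
  have hsigned : ∀ k ≤ d - 2, EqOn (truncPowIntegral ν (d - 1) k)
      (fun x => (-1 : ℝ) ^ k * iteratedDerivWithin k φ (Ioi 0) x) (Ioi 0) :=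
    fun k hk t ht => by
      dsimp only
      rw [hiter k hk ht, ← mul_assoc, ← mul_pow, neg_one_mul, neg_neg, one_pow, one_mul]
  refine ⟨fun t ht => ?_, fun k hk => ?_, fun k hk => ⟨?_, ?_, ?_⟩, ?_, ?_⟩
  · simpa only [truncPowDeriv_zero] using
      (integrable_truncPowDeriv hfin (by omega : 0 < d - 1) ht).lintegral_lt_top
  · exact DifferentiableOn.congr
      (fun t ht => (hderiv k hk t ht).differentiableAt.differentiableWithinAt) (hiter k hk.le)
  · exact fun t ht => (hsigned k hk ht).symm.trans_ge truncPowIntegral_nonneg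
  · exact (antitoneOn_truncPowIntegral hfin (by omega)).congr (hsigned k hk)
  · exact (convexOn_truncPowIntegral hfin (by omega)).congr (hsigned k hk)
  · exact hφ_eq ▸ tendsto_truncPowIntegral_atTop hfin (by omega)
  · exact hφ_eq ▸ tendsto_truncPowIntegral_nhdsGT_zero hfin (by omega) hinf

/-- For a measure `ν` on `(0,∞)` with `ν((t,∞)) < ∞` for all `t > 0` and
`ν((0,∞)) = ∞`, the function `φ_ν(t) = ∫ (1 − t/r)_+^{d-1} ν(dr)` is finite for `t > 0`,
is `d`-monotone on `(0,∞)`, tends to `0` at `∞` and to `∞` as `t ↓ 0`. -/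
theorem generator_of_radon_measure
    (d : ℕ) (hd : 2 ≤ d) (ν : Measure ℝ)
    (hsupp : ν (Set.Iic 0) = 0)
    (hfin : ∀ t : ℝ, 0 < t → ν (Set.Ioi t) < ⊤)
    (hinf : ν (Set.Ioi 0) = ⊤)
    (φ : ℝ → ℝ)
    (hφ : ∀ t : ℝ, φ t =
      (∫⁻ r in Set.Ioi (0 : ℝ), ENNReal.ofReal ((max (1 - t / r) 0) ^ (d - 1)) ∂ν).toReal) :
    (∀ t : ℝ, 0 < t →
      (∫⁻ r in Set.Ioi (0 : ℝ), ENNReal.ofReal ((max (1 - t / r) 0) ^ (d - 1)) ∂ν) < ⊤) ∧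
    (∀ k : ℕ, k < d - 2 →
      DifferentiableOn ℝ (iteratedDerivWithin k φ (Set.Ioi 0)) (Set.Ioi 0)) ∧
    (∀ k : ℕ, k ≤ d - 2 →
      (∀ x ∈ Set.Ioi (0 : ℝ), 0 ≤ (-1 : ℝ) ^ k * iteratedDerivWithin k φ (Set.Ioi 0) x) ∧
      AntitoneOn (fun x => (-1 : ℝ) ^ k * iteratedDerivWithin k φ (Set.Ioi 0) x)
        (Set.Ioi 0) ∧
      ConvexOn ℝ (Set.Ioi 0)
        (fun x => (-1 : ℝ) ^ k * iteratedDerivWithin k φ (Set.Ioi 0) x)) ∧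
    Filter.Tendsto φ Filter.atTop (nhds 0) ∧
    Filter.Tendsto φ (nhdsWithin 0 (Set.Ioi 0)) Filter.atTop :=
  generator_of_radon_measure_general d hd ν hfin hinf φ hφ
end

section
/- Fix an integer d ≥ 2 and a real number a > d − 1. Then for every x ∈ [0,a]: (Γ(a+1)/(Γ(d)·Γ(a−d+1))) · ∫_0^1 (1 − x/(a·b))_+^{d-1} · b^{d-1} (1−b)^{a−d} db = (1 − x/a)^a. (In probabilistic terms: if B has the Beta(d, a−d+1) distribution, then the random variable R = a·B has Williamson d-transform E[(1 − x/R)_+^{d-1}] = (1 − x/a)_+^a, the strict Clayton generator.) -/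
/-!
Substituting `x / (a b) = c / b` with `c = x / a` turns the integrand into the truncated power
`(b - c)_+^{d-1} (1 - b)^{a-d}`, which vanishes on `[0, c]`. On `[c, 1]` the affine change of
variables `b = c + (1 - c) u` pulls out `(1 - c)^a` and leaves the Beta integral
`B(d, a - d + 1)`, which is exactly cancelled by the normalising constant.
-/

open MeasureTheory Real Set intervalIntegral ProbabilityTheory

theorem integral_rpow_mul_one_sub_rpow_eq_beta {s t : ℝ} (hs : 0 < s) (ht : 0 < t) :
    ∫ u in (0 : ℝ)..1, u ^ (s - 1) * (1 - u) ^ (t - 1) = beta s t := by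
  have hcomplex : ((∫ u in (0 : ℝ)..1, u ^ (s - 1) * (1 - u) ^ (t - 1) : ℝ) : ℂ)
      = Complex.betaIntegral s t := by
    rw [← integral_ofReal, Complex.betaIntegral]
    refine integral_congr fun u hu => ?_
    rw [uIcc_of_le zero_le_one] at hu
    push_cast [Complex.ofReal_cpow hu.1, Complex.ofReal_cpow (sub_nonneg.2 hu.2)]
    rfl
  rw [beta_eq_betaIntegralReal s t hs ht, ← hcomplex, Complex.ofReal_re]

theorem integral_sub_rpow_mul_one_sub_rpow {c : ℝ} (hc : c < 1) (s t : ℝ) :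
    ∫ b in c..1, (b - c) ^ (s - 1) * (1 - b) ^ (t - 1)
      = (1 - c) ^ (s + t - 1) * ∫ u in (0 : ℝ)..1, u ^ (s - 1) * (1 - u) ^ (t - 1) := by
  have hc' : 0 < 1 - c := sub_pos.2 hc
  have hsubst := integral_comp_mul_add (a := 0) (b := 1)
    (fun b => (b - c) ^ (s - 1) * (1 - b) ^ (t - 1)) hc'.ne' c
  rw [mul_zero, zero_add, mul_one, sub_add_cancel] at hsubst
  have hscale : ∀ u ∈ uIcc (0 : ℝ) 1,
      ((1 - c) * u + c - c) ^ (s - 1) * (1 - ((1 - c) * u + c)) ^ (t - 1)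
        = ((1 - c) ^ (s - 1) * (1 - c) ^ (t - 1)) * (u ^ (s - 1) * (1 - u) ^ (t - 1)) := by
    intro u hu
    rw [uIcc_of_le zero_le_one] at hu
    rw [add_sub_cancel_right, show 1 - ((1 - c) * u + c) = (1 - c) * (1 - u) by ring,
      mul_rpow hc'.le hu.1, mul_rpow hc'.le (sub_nonneg.2 hu.2)]
    ring
  rw [integral_congr hscale, intervalIntegral.integral_const_mul, smul_eq_mul] at hsubst
  rw [eq_inv_mul_iff_mul_eq₀ hc'.ne'] at hsubst
  have hpow : (1 - c) * ((1 - c) ^ (s - 1) * (1 - c) ^ (t - 1)) = (1 - c) ^ (s + t - 1) := by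
    rw [← rpow_add hc', mul_comm, ← rpow_add_one hc'.ne']
    ring_nf
  rw [← hsubst, ← mul_assoc, hpow]

theorem max_one_sub_div_zero_pow_mul_pow {c b : ℝ} (hc : 0 ≤ c) (hb : 0 ≤ b) (n : ℕ) :
    max (1 - c / b) 0 ^ n * b ^ n = max (b - c) 0 ^ n := by
  rw [← mul_pow]
  congr 1
  rcases hb.eq_or_lt with rfl | hb
  · simp [hc]
  · rw [max_mul_of_nonneg _ _ hb.le, zero_mul, sub_mul, one_mul, div_mul_cancel₀ _ hb.ne']

theorem integral_max_sub_zero_pow_mul {f : ℝ → ℝ} {α β c : ℝ} (hαc : α ≤ c) (hcβ : c ≤ β)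
    {n : ℕ} (hn : n ≠ 0) (hf : IntervalIntegrable f volume α β) :
    ∫ b in α..β, max (b - c) 0 ^ n * f b = ∫ b in c..β, (b - c) ^ n * f b := by
  have hcmem : c ∈ uIcc α β := mem_uIcc_of_le hαc hcβ
  have hint : ∀ {γ δ}, uIcc γ δ ⊆ uIcc α β →
      IntervalIntegrable (fun b => max (b - c) 0 ^ n * f b) volume γ δ :=
    fun h => (hf.mono_set h).continuousOn_mul (by fun_prop)
  have hleft : ∫ b in α..c, max (b - c) 0 ^ n * f b = 0 := by
    refine (integral_congr fun b hb => ?_).trans integral_zero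
    rw [uIcc_of_le hαc] at hb
    simp [max_eq_right (sub_nonpos.2 hb.2), zero_pow hn]
  rw [← integral_add_adjacent_intervals (b := c) (hint (uIcc_subset_uIcc_left hcmem))
    (hint (uIcc_subset_uIcc_right hcmem)), hleft, zero_add]
  refine integral_congr fun b hb => ?_
  rw [uIcc_of_le hcβ] at hb
  simp only [max_eq_left (sub_nonneg.2 hb.1)]

theorem intervalIntegrable_one_sub_rpow {r : ℝ} (hr : -1 < r) (α β : ℝ) :
    IntervalIntegrable (fun b => (1 - b) ^ r) volume α β := by
  simpa using ((intervalIntegrable_rpow' hr (a := 1 - β) (b := 1 - α)).comp_sub_left 1).symm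

/-- If `B ∼ Beta(d, a−d+1)` then `R = a·B` has Williamson `d`-transform
`E[(1 − x/R)_+^{d-1}] = (1 − x/a)^a` for `x ∈ [0,a]` (the strict Clayton generator). -/
theorem clayton_williamson_transform
    (d : ℕ) (hd : 2 ≤ d) (a : ℝ) (ha : (d : ℝ) - 1 < a) :
    ∀ x ∈ Set.Icc (0 : ℝ) a,
      (Real.Gamma (a + 1) / (Real.Gamma d * Real.Gamma (a - d + 1))) *
          ∫ b in (0 : ℝ)..1,
            (max (1 - x / (a * b)) 0) ^ (d - 1) * b ^ (d - 1) * (1 - b) ^ (a - (d : ℝ))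
        = (1 - x / a) ^ a := by
  rintro x ⟨hx0, hxa⟩
  have hd1 : (1 : ℝ) ≤ d := by exact_mod_cast (by omega : 1 ≤ d)
  have ha0 : 0 < a := by linarith
  set c := x / a
  have hc0 : 0 ≤ c := div_nonneg hx0 ha0.le
  have hc1 : c ≤ 1 := (div_le_one ha0).2 hxa
  have htruncate : ∀ b ∈ uIcc (0 : ℝ) 1,
      max (1 - x / (a * b)) 0 ^ (d - 1) * b ^ (d - 1) * (1 - b) ^ (a - (d : ℝ))
        = max (b - c) 0 ^ (d - 1) * (1 - b) ^ (a - (d : ℝ)) := fun b hb => by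
    rw [uIcc_of_le zero_le_one] at hb
    rw [← div_div, max_one_sub_div_zero_pow_mul_pow hc0 hb.1]
  rw [integral_congr htruncate, integral_max_sub_zero_pow_mul hc0 hc1 (by omega)
    (intervalIntegrable_one_sub_rpow (by linarith) 0 1)]
  rcases hc1.eq_or_lt with hc1 | hc1
  · rw [hc1, integral_same, mul_zero, sub_self, zero_rpow ha0.ne']
  have hbeta : ∫ b in c..1, (b - c) ^ (d - 1) * (1 - b) ^ (a - (d : ℝ))
      = (1 - c) ^ a * beta d (a - d + 1) := by
    have hexp : ∀ b ∈ uIcc c 1, (b - c) ^ (d - 1) * (1 - b) ^ (a - (d : ℝ))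
        = (b - c) ^ ((d : ℝ) - 1) * (1 - b) ^ ((a - d + 1) - 1) := fun b _ => by
      rw [← rpow_natCast, Nat.cast_sub (by omega), Nat.cast_one, add_sub_cancel_right]
    rw [integral_congr hexp, integral_sub_rpow_mul_one_sub_rpow hc1,
      integral_rpow_mul_one_sub_rpow_eq_beta (by linarith) (by linarith),
      show (d : ℝ) + (a - d + 1) - 1 = a by ring]
  have hconst : Real.Gamma (a + 1) / (Real.Gamma d * Real.Gamma (a - d + 1))
      = (beta d (a - d + 1))⁻¹ := by
    rw [beta, inv_div, show (d : ℝ) + (a - d + 1) = a + 1 by ring]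
  rw [hbeta, hconst, mul_comm, mul_assoc,
    mul_inv_cancel₀ (beta_pos (by linarith) (by linarith)).ne', mul_one]
end

section
/- Fix an integer d ≥ 2. Let F and G be probability measures on the interval (0,1] such that ∫_{(0,1]} (1 − c/v)_+^{d-1} dF(v) = ∫_{(0,1]} (1 − c/v)_+^{d-1} dG(v) for every c ∈ (0,1). Then F = G. (That is, the Williamson d-transform is injective on probability measures on (0,1].) -/
/-!
Multiplying the transform `W(c) = ∫ (1 - c/v)_+^(d-1) dF(v)` by `c^k` and integrating over
`c ∈ (0,1)` gives, by Fubini and the substitution `c = t v`, the moment `∫ v^(k+1) dF(v)` times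
the positive Beta integral `∫₀¹ t^k (1-t)^(d-1) dt`. Hence `F` and `G` have the same moments, and
a finite measure on a compact interval is determined by its moments by Weierstrass approximation.
-/

open MeasureTheory Set

section Moments

variable {a b : ℝ} {μ ν : Measure ℝ} [IsFiniteMeasure μ] [IsFiniteMeasure ν]

lemma integrable_of_ae_mem_Icc (hμ : ∀ᵐ x ∂μ, x ∈ Icc a b) {f : ℝ → ℝ} (hf : Continuous f) :
    Integrable f μ := by
  rw [← Measure.restrict_eq_self_of_ae_mem hμ]
  exact hf.integrableOn_Icc

lemma dist_integral_le_of_ae_mem_Icc (hμ : ∀ᵐ x ∂μ, x ∈ Icc a b) {f g : ℝ → ℝ}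
    (hf : Continuous f) (hg : Continuous g) {δ : ℝ} (hfg : ∀ x ∈ Icc a b, dist (f x) (g x) ≤ δ) :
    dist (∫ x, f x ∂μ) (∫ x, g x ∂μ) ≤ δ * μ.real univ := by
  rw [dist_eq_norm,
    ← integral_sub (integrable_of_ae_mem_Icc hμ hf) (integrable_of_ae_mem_Icc hμ hg)]
  exact norm_integral_le_of_norm_le_const (hμ.mono fun x hx => hfg x hx)

lemma integral_eval_eq_of_integral_pow_eq (hμ : ∀ᵐ x ∂μ, x ∈ Icc a b)
    (hν : ∀ᵐ x ∂ν, x ∈ Icc a b) (h : ∀ n : ℕ, ∫ x, x ^ n ∂μ = ∫ x, x ^ n ∂ν)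
    (p : Polynomial ℝ) : ∫ x, p.eval x ∂μ = ∫ x, p.eval x ∂ν := by
  have hpow (ρ : Measure ℝ) [IsFiniteMeasure ρ] (hρ : ∀ᵐ x ∂ρ, x ∈ Icc a b) (i : ℕ) :
      Integrable (fun x => p.coeff i * x ^ i) ρ :=
    integrable_of_ae_mem_Icc hρ (by fun_prop)
  simp only [Polynomial.eval_eq_sum_range]
  rw [integral_finsetSum _ fun i _ => hpow μ hμ i, integral_finsetSum _ fun i _ => hpow ν hν i]
  simp only [integral_const_mul, h]

lemma integral_eq_of_integral_pow_eq (hμ : ∀ᵐ x ∂μ, x ∈ Icc a b)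
    (hν : ∀ᵐ x ∂ν, x ∈ Icc a b) (h : ∀ n : ℕ, ∫ x, x ^ n ∂μ = ∫ x, x ^ n ∂ν)
    {f : ℝ → ℝ} (hf : Continuous f) : ∫ x, f x ∂μ = ∫ x, f x ∂ν := by
  set M := μ.real univ + ν.real univ
  have hM : 0 ≤ M := by positivity
  refine eq_of_forall_dist_le fun ε hε => ?_
  obtain ⟨p, hp⟩ := exists_polynomial_near_of_continuousOn a b f hf.continuousOn
    (ε / (M + 1)) (by positivity)
  have hpf : ∀ x ∈ Icc a b, dist (f x) (p.eval x) ≤ ε / (M + 1) := fun x hx => by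
    rw [dist_comm]; exact (hp x hx).le
  have hp_cont : Continuous fun x => p.eval x := p.continuous
  calc dist (∫ x, f x ∂μ) (∫ x, f x ∂ν)
      ≤ dist (∫ x, f x ∂μ) (∫ x, p.eval x ∂μ) + dist (∫ x, p.eval x ∂ν) (∫ x, f x ∂ν) := by
        rw [integral_eval_eq_of_integral_pow_eq hμ hν h p]; exact dist_triangle _ _ _
    _ ≤ ε / (M + 1) * μ.real univ + ε / (M + 1) * ν.real univ := by
        rw [dist_comm (∫ x, p.eval x ∂ν)]
        exact add_le_add (dist_integral_le_of_ae_mem_Icc hμ hf hp_cont hpf)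
          (dist_integral_le_of_ae_mem_Icc hν hf hp_cont hpf)
    _ = ε * (M / (M + 1)) := by ring
    _ ≤ ε := mul_le_of_le_one_right hε.le ((div_le_one (by positivity)).2 (by linarith))

theorem MeasureTheory.Measure.ext_of_integral_pow_eq (hμ : ∀ᵐ x ∂μ, x ∈ Icc a b)
    (hν : ∀ᵐ x ∂ν, x ∈ Icc a b) (h : ∀ n : ℕ, ∫ x, x ^ n ∂μ = ∫ x, x ^ n ∂ν) : μ = ν :=
  ext_of_forall_integral_eq_of_IsFiniteMeasure fun f =>
    integral_eq_of_integral_pow_eq hμ hν h f.continuous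

end Moments

noncomputable def williamsonTransform (d : ℕ) (μ : Measure ℝ) (c : ℝ) : ℝ :=
  ∫ v, (max (1 - c / v) 0) ^ (d - 1) ∂μ

lemma integral_pow_mul_one_sub_pow_pos (k m : ℕ) :
    0 < ∫ t in (0 : ℝ)..1, t ^ k * (1 - t) ^ m :=
  intervalIntegral.intervalIntegral_pos_of_pos_on
    (Continuous.intervalIntegrable (by fun_prop) _ _)
    (fun _ ht => mul_pos (pow_pos ht.1 _) (pow_pos (sub_pos.2 ht.2) _)) zero_lt_one

lemma integral_pow_mul_max_one_sub_div_pow {k m : ℕ} {v : ℝ} (hv : 0 < v) :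
    ∫ c in (0 : ℝ)..v, c ^ k * (max (1 - c / v) 0) ^ m
      = (∫ t in (0 : ℝ)..1, t ^ k * (1 - t) ^ m) * v ^ (k + 1) := by
  have hsub : ∫ t in (0 : ℝ)..1, (t * v) ^ k * (max (1 - t * v / v) 0) ^ m
      = v ^ k * ∫ t in (0 : ℝ)..1, t ^ k * (1 - t) ^ m := by
    rw [← intervalIntegral.integral_const_mul]
    refine intervalIntegral.integral_congr fun t ht => ?_
    rw [uIcc_of_le zero_le_one] at ht
    rw [mul_div_cancel_right₀ t hv.ne', max_eq_left (sub_nonneg.2 ht.2)]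
    ring
  rw [intervalIntegral.integral_comp_mul_right (fun c => c ^ k * (max (1 - c / v) 0) ^ m)
    hv.ne', zero_mul, one_mul, smul_eq_mul, inv_mul_eq_iff_eq_mul₀ hv.ne'] at hsub
  rw [hsub]
  ring

lemma integral_Ioo_pow_mul_max_one_sub_div_pow {k m : ℕ} (hm : m ≠ 0) {v : ℝ}
    (hv : v ∈ Ioc (0 : ℝ) 1) :
    ∫ c in Ioo (0 : ℝ) 1, c ^ k * (max (1 - c / v) 0) ^ m
      = (∫ t in (0 : ℝ)..1, t ^ k * (1 - t) ^ m) * v ^ (k + 1) := by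
  have hcont : Continuous fun c : ℝ => c ^ k * (max (1 - c / v) 0) ^ m := by fun_prop
  have hvanish :
      EqOn (fun c : ℝ => c ^ k * (max (1 - c / v) 0) ^ m) (fun _ => 0) (uIcc v 1) := by
    intro c hc
    rw [uIcc_of_le hv.2] at hc
    have : 1 - c / v ≤ 0 := by
      rw [sub_nonpos, one_le_div hv.1]; exact hc.1
    simp [max_eq_right this, zero_pow hm]
  rw [← integral_Ioc_eq_integral_Ioo, ← intervalIntegral.integral_of_le zero_le_one,
    ← intervalIntegral.integral_add_adjacent_intervals (b := v) (hcont.intervalIntegrable _ _)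
      (hcont.intervalIntegrable _ _),
    intervalIntegral.integral_congr hvanish, intervalIntegral.integral_zero, add_zero,
    integral_pow_mul_max_one_sub_div_pow hv.1]

lemma integral_Ioo_pow_mul_williamsonTransform {d : ℕ} (hd : 2 ≤ d) (k : ℕ) {μ : Measure ℝ}
    [IsFiniteMeasure μ] (hμ : ∀ᵐ v ∂μ, v ∈ Ioc (0 : ℝ) 1) :
    ∫ c in Ioo (0 : ℝ) 1, c ^ k * williamsonTransform d μ c
      = (∫ t in (0 : ℝ)..1, t ^ k * (1 - t) ^ (d - 1)) * ∫ v, v ^ (k + 1) ∂μ := by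
  have hbound : ∀ c ∈ Ioo (0 : ℝ) 1, ∀ v ∈ Ioc (0 : ℝ) 1,
      ‖c ^ k * (max (1 - c / v) 0) ^ (d - 1)‖ ≤ 1 := by
    intro c hc v hv
    have hmax : max (1 - c / v) 0 ≤ 1 :=
      max_le (sub_le_self _ (div_nonneg hc.1.le hv.1.le)) zero_le_one
    rw [norm_mul, norm_pow, norm_pow, Real.norm_of_nonneg hc.1.le,
      Real.norm_of_nonneg (le_max_right _ _)]
    exact mul_le_one₀ (pow_le_one₀ hc.1.le hc.2.le) (by positivity)
      (pow_le_one₀ (le_max_right _ _) hmax)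
  have hint : Integrable (Function.uncurry fun c v : ℝ => c ^ k * (max (1 - c / v) 0) ^ (d - 1))
      ((volume.restrict (Ioo (0 : ℝ) 1)).prod μ) := by
    refine Integrable.mono' (integrable_const 1) (by fun_prop) ?_
    filter_upwards [Measure.quasiMeasurePreserving_fst.ae (ae_restrict_mem measurableSet_Ioo),
      Measure.quasiMeasurePreserving_snd.ae hμ] with p hc hv
    exact hbound p.1 hc p.2 hv
  calc ∫ c in Ioo (0 : ℝ) 1, c ^ k * williamsonTransform d μ c
      = ∫ c in Ioo (0 : ℝ) 1, (∫ v, c ^ k * (max (1 - c / v) 0) ^ (d - 1) ∂μ) := by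
        simp only [williamsonTransform, integral_const_mul]
    _ = ∫ v, (∫ c in Ioo (0 : ℝ) 1, c ^ k * (max (1 - c / v) 0) ^ (d - 1)) ∂μ :=
        integral_integral_swap hint
    _ = ∫ v, (∫ t in (0 : ℝ)..1, t ^ k * (1 - t) ^ (d - 1)) * v ^ (k + 1) ∂μ :=
        integral_congr_ae (hμ.mono fun v hv =>
          integral_Ioo_pow_mul_max_one_sub_div_pow (by omega) hv)
    _ = _ := integral_const_mul _ _

/-- The Williamson `d`-transform is injective on probability measures
on `(0,1]`: if two such measures have the same Williamson `d`-transform on `(0,1)`,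
they coincide. -/
theorem williamson_transform_injective
    (d : ℕ) (hd : 2 ≤ d) (F G : Measure ℝ)
    [IsProbabilityMeasure F] [IsProbabilityMeasure G]
    (hF : F {v | v ∉ Set.Ioc (0 : ℝ) 1} = 0)
    (hG : G {v | v ∉ Set.Ioc (0 : ℝ) 1} = 0)
    (h : ∀ c ∈ Set.Ioo (0 : ℝ) 1,
      ∫ v in Set.Ioc (0 : ℝ) 1, (max (1 - c / v) 0) ^ (d - 1) ∂F
        = ∫ v in Set.Ioc (0 : ℝ) 1, (max (1 - c / v) 0) ^ (d - 1) ∂G) :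
    F = G := by
  have hF' : ∀ᵐ v ∂F, v ∈ Ioc (0 : ℝ) 1 := ae_iff.2 hF
  have hG' : ∀ᵐ v ∂G, v ∈ Ioc (0 : ℝ) 1 := ae_iff.2 hG
  have htransform : EqOn (williamsonTransform d F) (williamsonTransform d G) (Ioo 0 1) := by
    intro c hc
    simpa only [williamsonTransform, Measure.restrict_eq_self_of_ae_mem hF',
      Measure.restrict_eq_self_of_ae_mem hG'] using h c hc
  refine Measure.ext_of_integral_pow_eq (hF'.mono fun _ hv => Ioc_subset_Icc_self hv)
    (hG'.mono fun _ hv => Ioc_subset_Icc_self hv) fun n => ?_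
  cases n with
  | zero => simp
  | succ k =>
    refine mul_left_cancel₀ (integral_pow_mul_one_sub_pow_pos k (d - 1)).ne' ?_
    rw [← integral_Ioo_pow_mul_williamsonTransform hd k hF',
      ← integral_Ioo_pow_mul_williamsonTransform hd k hG']
    exact setIntegral_congr_fun measurableSet_Ioo fun c hc => by rw [htransform hc]
end
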